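/- arXiv:2603.20396 — 9 statements merged into one kernel-verified Lean document; each statement's English description precedes it below -/
import Mathlib

section
/- Let b ≥ 2 be an integer and let M = { b^j · a_i : 1 ≤ i ≤ n, j ≥ 1 } ⊆ A_n be the place-notation macro set. Then for every integer s ≥ 1 the expansion function satisfies b^{s/(n(b-1)) − 1} ≤ f_{G'}(s) ≤ n·b · b^{s/(n(b-1))}. In particular f_{G'}(s) = Θ(b^{s/(n(b-1))}). Moreover the macro set has logarithmic density: the number of macros of G-length at most r is n·⌊log_b r⌋. -/
/-!
The `G ∪ M`-length of `w` is its total base-`b` digit sum `∑ᵢ s_b(wᵢ)`: writing each coordinate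
in base `b` gives a word of that length, and no word is shorter because adding a power of `b`
raises a digit sum by at most one. A vector of `G`-length at most `b ^ q` has digit sum at most
`n(b-1)q`, while the vector with all coordinates `b ^ (q+1) - 1` has digit sum `n(b-1)(q+1)`;
taking `q = ⌊s / (n(b-1))⌋` gives both bounds.
-/

open scoped ENNReal BigOperators

/-- The length of an element of the free abelian monoid `A_n = ℕ^n` with respect to the
standard generators `G = {a_1, …, a_n}`: the sum of its coordinates. -/
def glen {n : ℕ} (w : Fin n → ℕ) : ℕ := ∑ j, w j

/-- The standard generating set `G` of `A_n = ℕ^n`: the standard basis vectors. -/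
def gens (n : ℕ) : Set (Fin n → ℕ) := {w | ∃ i : Fin n, w = fun t => if t = i then 1 else 0}

/-- The length of `w` with respect to a generating set `S`: the minimum number of elements
of `S` (with repetition) summing to `w`; `⊤` if `w` is not representable. -/
noncomputable def slen {n : ℕ} (S : Set (Fin n → ℕ)) (w : Fin n → ℕ) : ℕ∞ :=
  sInf {k : ℕ∞ | ∃ l : Multiset (Fin n → ℕ), (∀ x ∈ l, x ∈ S) ∧ l.sum = w ∧ (l.card : ℕ∞) = k}

/-- The expansion function `f_{G'}(s) = sup { r ∈ ℕ : B_G(r) ⊆ B_{G'}(s) }`, valued in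
`ℝ≥0∞` (so that `⊤` means the ball inclusion holds for every radius `r`). -/
noncomputable def expansion {n : ℕ} (S : Set (Fin n → ℕ)) (s : ℕ) : ℝ≥0∞ :=
  sSup {x : ℝ≥0∞ | ∃ r : ℕ, x = (r : ℝ≥0∞) ∧ ∀ w : Fin n → ℕ, glen w ≤ r → slen S w ≤ (s : ℕ∞)}

def digitSum (b m : ℕ) : ℕ := (b.digits m).sum

section DigitSum

variable {b : ℕ}

theorem digitSum_add_mul (hb : 1 < b) {r : ℕ} (hr : r < b) (k : ℕ) :
    digitSum b (r + b * k) = r + digitSum b k := by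
  by_cases h : r = 0 ∧ k = 0
  · simp [h.1, h.2, digitSum]
  · rw [digitSum, Nat.digits_add b hb r k hr (by tauto), List.sum_cons, digitSum]

theorem digitSum_eq_mod_add_div (hb : 1 < b) (m : ℕ) :
    digitSum b m = m % b + digitSum b (m / b) := by
  conv_lhs => rw [← Nat.mod_add_div m b]
  exact digitSum_add_mul hb (Nat.mod_lt m (by omega)) _

theorem digitSum_pow (hb : 1 < b) (j : ℕ) : digitSum b (b ^ j) = 1 := by
  rw [digitSum, ← mul_one (b ^ j), Nat.digits_base_pow_mul hb one_pos,
    Nat.digits_of_lt b 1 one_ne_zero hb]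
  simp

theorem digitSum_pow_sub_one (hb : 1 < b) (m : ℕ) : digitSum b (b ^ m - 1) = (b - 1) * m := by
  induction m with
  | zero => simp [digitSum]
  | succ m ih =>
    have hbm : 1 ≤ b ^ m := Nat.one_le_pow _ _ (by omega)
    have : b ^ (m + 1) - 1 = (b - 1) + b * (b ^ m - 1) := by
      rw [pow_succ, Nat.mul_sub, mul_one, mul_comm]
      have : b ≤ b * b ^ m := Nat.le_mul_of_pos_right b hbm
      omega
    rw [this, digitSum_add_mul hb (by omega), ih]
    ring

theorem digitSum_le_of_lt_pow (hb : 1 < b) {m q : ℕ} (hm : m < b ^ q) :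
    digitSum b m ≤ (b - 1) * q :=
  calc digitSum b m ≤ (b.digits m).length * (b - 1) :=
        List.sum_le_card_nsmul _ _ fun _ hd => Nat.le_sub_one_of_lt (Nat.digits_lt_base hb hd)
    _ ≤ q * (b - 1) := Nat.mul_le_mul_right _ ((Nat.digits_length_le_iff hb m).2 hm)
    _ = (b - 1) * q := mul_comm _ _

theorem digitSum_le_of_le_pow (hb : 1 < b) {m q : ℕ} (hq : 1 ≤ q) (hm : m ≤ b ^ q) :
    digitSum b m ≤ (b - 1) * q := by
  rcases hm.lt_or_eq with hm | rfl
  · exact digitSum_le_of_lt_pow hb hm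
  · rw [digitSum_pow hb]
    exact Nat.one_le_iff_ne_zero.2 (Nat.mul_ne_zero (by omega) (by omega))

theorem digitSum_succ_le (hb : 1 < b) (x : ℕ) : digitSum b (x + 1) ≤ digitSum b x + 1 := by
  induction x using Nat.strong_induction_on with
  | _ x ih =>
    rw [digitSum_eq_mod_add_div hb x]
    rcases Nat.lt_or_ge (x % b + 1) b with hlt | hge
    · have : x + 1 = (x % b + 1) + b * (x / b) := by have := Nat.mod_add_div x b; omega
      rw [this, digitSum_add_mul hb hlt]
      omega
    · -- the last digit is `b - 1`, so adding one carries
      have hx : 0 < x := Nat.pos_of_ne_zero fun h => by simp [h] at hge; omega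
      have : x + 1 = 0 + b * (x / b + 1) := by
        have := Nat.mod_add_div x b; have := Nat.mod_lt x (show 0 < b by omega)
        rw [Nat.mul_add]; omega
      rw [this, digitSum_add_mul hb (by omega)]
      have := ih (x / b) (Nat.div_lt_self hx hb)
      omega

theorem digitSum_pow_add_le (hb : 1 < b) (j x : ℕ) :
    digitSum b (b ^ j + x) ≤ digitSum b x + 1 := by
  induction j generalizing x with
  | zero => rw [pow_zero, add_comm]; exact digitSum_succ_le hb x
  | succ j ih =>
    have : b ^ (j + 1) + x = x % b + b * (b ^ j + x / b) := by
      rw [Nat.mul_add, pow_succ, mul_comm (b ^ j)]; have := Nat.mod_add_div x b; omega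
    rw [this, digitSum_add_mul hb (Nat.mod_lt x (by omega)), digitSum_eq_mod_add_div hb x]
    have := ih (x / b)
    omega

theorem exists_multiset_pow_sum_eq_card_eq_digitSum (hb : 1 < b) (m : ℕ) :
    ∃ l : Multiset ℕ, (∀ x ∈ l, ∃ j, x = b ^ j) ∧ l.sum = m ∧ Multiset.card l = digitSum b m := by
  induction m using Nat.strong_induction_on with
  | _ m ih =>
    rcases m.eq_zero_or_pos with rfl | hm
    · exact ⟨0, by simp [digitSum]⟩
    obtain ⟨l, hl, hsum, hcard⟩ := ih (m / b) (Nat.div_lt_self hm hb)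
    refine ⟨l.map (b * ·) + Multiset.replicate (m % b) 1, ?_, ?_, ?_⟩
    · simp only [Multiset.mem_add, Multiset.mem_map, Multiset.mem_replicate]
      rintro _ (⟨y, hy, rfl⟩ | ⟨-, rfl⟩)
      · obtain ⟨j, rfl⟩ := hl y hy
        exact ⟨j + 1, (pow_succ' b j).symm⟩
      · exact ⟨0, rfl⟩
    · rw [Multiset.sum_add, Multiset.sum_map_mul_left, Multiset.map_id', hsum,
        Multiset.sum_replicate, smul_eq_mul, mul_one, add_comm]
      exact Nat.mod_add_div m b
    · rw [Multiset.card_add, Multiset.card_map, Multiset.card_replicate, hcard,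
        digitSum_eq_mod_add_div hb m, add_comm]

end DigitSum

def placeMacros (n b : ℕ) : Set (Fin n → ℕ) := {w | ∃ i j, 1 ≤ j ∧ w = Pi.single i (b ^ j)}

section WordLength

variable {n b : ℕ}

theorem glen_single (i : Fin n) (x : ℕ) : glen (Pi.single i x) = x := by
  simp [glen]

theorem gens_union_placeMacros :
    gens n ∪ placeMacros n b = {w | ∃ i j, w = Pi.single i (b ^ j)} := by
  ext w
  simp only [gens, placeMacros, Set.mem_union, Set.mem_ofPred_eq]
  constructor
  · rintro (⟨i, rfl⟩ | ⟨i, j, -, rfl⟩)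
    · exact ⟨i, 0, by ext t; simp [Pi.single_apply]⟩
    · exact ⟨i, j, rfl⟩
  · rintro ⟨i, j, rfl⟩
    rcases j.eq_zero_or_pos with rfl | hj
    · exact Or.inl ⟨i, by ext t; simp [Pi.single_apply]⟩
    · exact Or.inr ⟨i, j, hj, rfl⟩

theorem sum_digitSum_sum_le_card (hb : 1 < b) (l : Multiset (Fin n → ℕ))
    (hl : ∀ x ∈ l, ∃ i j, x = Pi.single i (b ^ j)) :
    ∑ t, digitSum b (l.sum t) ≤ Multiset.card l := by
  induction l using Multiset.induction_on with
  | empty => simp [digitSum]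
  | cons a l ih =>
    obtain ⟨i, j, rfl⟩ := hl a (Multiset.mem_cons_self a l)
    have ih := ih fun x hx => hl x (Multiset.mem_cons_of_mem hx)
    have hstep (t : Fin n) : digitSum b ((Pi.single i (b ^ j) + l.sum : Fin n → ℕ) t) ≤
        digitSum b (l.sum t) + (Pi.single i 1 : Fin n → ℕ) t := by
      rcases eq_or_ne t i with rfl | ht
      · simpa using digitSum_pow_add_le hb j (l.sum t)
      · simp [ht]
    rw [Multiset.sum_cons]
    calc ∑ t, digitSum b ((Pi.single i (b ^ j) + l.sum : Fin n → ℕ) t)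
        ≤ ∑ t, (digitSum b (l.sum t) + (Pi.single i 1 : Fin n → ℕ) t) :=
          Finset.sum_le_sum fun t _ => hstep t
      _ = ∑ t, digitSum b (l.sum t) + 1 := by simp [Finset.sum_add_distrib]
      _ ≤ Multiset.card (Pi.single i (b ^ j) ::ₘ l) := by simpa using ih

theorem slen_single_pow_eq_sum_digitSum (hb : 1 < b) (w : Fin n → ℕ) :
    slen {w | ∃ i j, w = Pi.single i (b ^ j)} w = ∑ i, digitSum b (w i) := by
  refine le_antisymm ?_ ?_
  · choose l hl hsum hcard using fun i => exists_multiset_pow_sum_eq_card_eq_digitSum hb (w i)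
    refine sInf_le ⟨Finset.univ.val.bind fun i => (l i).map (Pi.single i), ?_, ?_, ?_⟩
    · simp only [Multiset.mem_bind, Multiset.mem_map]
      rintro _ ⟨i, -, x, hx, rfl⟩
      obtain ⟨j, rfl⟩ := hl i x hx
      exact ⟨i, j, rfl⟩
    · have (i : Fin n) : ((l i).map (Pi.single i)).sum = (Pi.single i (w i) : Fin n → ℕ) := by
        rw [← hsum i]
        exact (map_multiset_sum (AddMonoidHom.single (fun _ : Fin n => ℕ) i) (l i)).symm
      rw [Multiset.sum_bind, ← Finset.sum_eq_multiset_sum]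
      simp only [this, Finset.univ_sum_single]
    · rw [Multiset.card_bind, ← Finset.sum_eq_multiset_sum]
      simp [hcard]
  · refine le_sInf ?_
    rintro _ ⟨l, hl, rfl, rfl⟩
    exact_mod_cast sum_digitSum_sum_le_card hb l hl

end WordLength

section Expansion

variable {n : ℕ} {S : Set (Fin n → ℕ)} {s : ℕ}

theorem le_expansion {r : ℕ} (h : ∀ w : Fin n → ℕ, glen w ≤ r → slen S w ≤ s) :
    (r : ℝ≥0∞) ≤ expansion S s :=
  le_sSup ⟨r, rfl, h⟩

theorem expansion_le_glen {w : Fin n → ℕ} (hw : (s : ℕ∞) < slen S w) :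
    expansion S s ≤ glen w := by
  refine sSup_le ?_
  rintro _ ⟨r, rfl, hr⟩
  by_contra! hlt
  exact (hr w (by exact_mod_cast hlt.le)).not_gt hw

end Expansion

section PlaceNotation

variable {n b : ℕ}

theorem pow_le_expansion_placeMacros (hb : 1 < b) {s : ℕ} (hs : 1 ≤ s) :
    ((b ^ (s / (n * (b - 1))) : ℕ) : ℝ≥0∞) ≤ expansion (gens n ∪ placeMacros n b) s := by
  set q := s / (n * (b - 1))
  refine le_expansion fun w hw => ?_
  rw [gens_union_placeMacros, slen_single_pow_eq_sum_digitSum hb]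
  norm_cast
  rcases q.eq_zero_or_pos with hq | hq
  · calc ∑ i, digitSum b (w i) ≤ glen w := Finset.sum_le_sum fun i _ => Nat.digit_sum_le b (w i)
      _ ≤ s := by simpa [hq] using hw.trans (by simpa [hq] using hs)
  · have hwi (i : Fin n) : w i ≤ b ^ q :=
      (Finset.single_le_sum (by simp) (Finset.mem_univ i)).trans hw
    calc ∑ i, digitSum b (w i) ≤ ∑ _i : Fin n, (b - 1) * q :=
          Finset.sum_le_sum fun i _ => digitSum_le_of_le_pow hb hq (hwi i)
      _ = n * (b - 1) * q := by simp [mul_assoc]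
      _ ≤ s := Nat.mul_div_le s _

theorem expansion_placeMacros_le (hn : 1 ≤ n) (hb : 1 < b) (s : ℕ) :
    expansion (gens n ∪ placeMacros n b) s ≤ ((n * b ^ (s / (n * (b - 1)) + 1) : ℕ) : ℝ≥0∞) := by
  set q := s / (n * (b - 1))
  have hslen : (s : ℕ∞) < slen (gens n ∪ placeMacros n b) fun _ => b ^ (q + 1) - 1 := by
    rw [gens_union_placeMacros, slen_single_pow_eq_sum_digitSum hb]
    simp only [digitSum_pow_sub_one hb, Finset.sum_const, Finset.card_univ, Fintype.card_fin,
      smul_eq_mul]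
    have := Nat.lt_mul_div_succ s (Nat.mul_pos hn (Nat.sub_pos_of_lt hb))
    exact_mod_cast this.trans_eq (by ring)
  have hglen : glen (fun _ : Fin n => b ^ (q + 1) - 1) ≤ n * b ^ (q + 1) := by
    simpa [glen] using Nat.mul_le_mul_left n (Nat.sub_le (b ^ (q + 1)) 1)
  exact (expansion_le_glen hslen).trans (by exact_mod_cast hglen)

theorem single_pow_injective (hb : 1 < b) :
    Function.Injective fun p : Fin n × ℕ => (Pi.single p.1 (b ^ p.2) : Fin n → ℕ) := by
  rintro ⟨i, j⟩ ⟨i', j'⟩ h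
  have hi := congrFun h i
  rcases eq_or_ne i i' with rfl | hii
  · simpa using Nat.pow_right_injective hb (by simpa using hi)
  · simp [hii] at hi
    omega

theorem placeMacros_inter_glen_le (hb : 1 < b) {r : ℕ} (hr : r ≠ 0) :
    placeMacros n b ∩ {w | glen w ≤ r} =
      (fun p : Fin n × ℕ => Pi.single p.1 (b ^ p.2)) '' (Set.univ ×ˢ Set.Icc 1 (Nat.log b r)) := by
  ext w
  simp only [placeMacros, Set.mem_inter_iff, Set.mem_image, Set.mem_prod, Set.mem_Icc,
    Set.mem_ofPred_eq, Set.mem_univ, true_and, Prod.exists]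
  constructor
  · rintro ⟨⟨i, j, hj, rfl⟩, hw⟩
    rw [glen_single] at hw
    exact ⟨i, j, ⟨hj, Nat.le_log_of_pow_le hb hw⟩, rfl⟩
  · rintro ⟨i, j, ⟨hj, hjr⟩, rfl⟩
    exact ⟨⟨i, j, hj, rfl⟩, (glen_single i _).trans_le (Nat.pow_le_of_le_log hr hjr)⟩

theorem ncard_placeMacros_inter_glen_le (hb : 1 < b) {r : ℕ} (hr : r ≠ 0) :
    (placeMacros n b ∩ {w | glen w ≤ r}).ncard = n * Nat.log b r := by
  rw [placeMacros_inter_glen_le hb hr, Set.ncard_image_of_injective _ (single_pow_injective hb),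
    Set.ncard_prod]
  simp

end PlaceNotation

theorem Real.rpow_sub_one_le_pow_floor {b : ℝ} (hb : 1 ≤ b) (x : ℝ) :
    b ^ (x - 1) ≤ b ^ ⌊x⌋₊ := by
  rw [← Real.rpow_natCast]
  exact Real.rpow_le_rpow_of_exponent_le hb (Nat.sub_one_lt_floor x).le

theorem Real.pow_floor_le_rpow {b x : ℝ} (hb : 1 ≤ b) (hx : 0 ≤ x) : b ^ ⌊x⌋₊ ≤ b ^ x := by
  rw [← Real.rpow_natCast]
  exact Real.rpow_le_rpow_of_exponent_le hb (Nat.floor_le hx)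

/-- **Place notation gives exponential expansion.**
For `A_n` and an integer `b ≥ 2`, the macro set `M = { b^j · a_i : 1 ≤ i ≤ n, j ≥ 1 }`
has logarithmic density (`|M ∩ B_G(r)| = n⌊log_b r⌋` for `r ≥ 1`), and for every `s ≥ 1`,
`b^{s/(n(b-1)) - 1} ≤ f_{G'}(s) ≤ n·b · b^{s/(n(b-1))}`. -/
theorem place_notation_exponential_expansion
    (n b : ℕ) (hn : 1 ≤ n) (hb : 2 ≤ b)
    (M : Set (Fin n → ℕ))
    (hM : M = {w | ∃ i : Fin n, ∃ j : ℕ, 1 ≤ j ∧ w = fun t => if t = i then b ^ j else 0}) :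
    (∀ r : ℕ, 1 ≤ r → (M ∩ {w | glen w ≤ r}).ncard = n * Nat.log b r) ∧
    (∀ s : ℕ, 1 ≤ s →
      ENNReal.ofReal ((b : ℝ) ^ ((s : ℝ) / ((n : ℝ) * ((b : ℝ) - 1)) - 1))
          ≤ expansion (gens n ∪ M) s ∧
      expansion (gens n ∪ M) s
          ≤ ENNReal.ofReal ((n : ℝ) * (b : ℝ) * (b : ℝ) ^ ((s : ℝ) / ((n : ℝ) * ((b : ℝ) - 1))))) := by
  have hsingle (i : Fin n) (x : ℕ) : (fun t => if t = i then x else 0) = Pi.single i x :=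
    funext fun t => (Pi.single_apply i x t).symm
  simp only [hsingle] at hM
  subst hM
  refine ⟨fun r hr => ncard_placeMacros_inter_glen_le hb (by omega), fun s hs => ?_⟩
  set x := (s : ℝ) / (n * (b - 1))
  have hq : s / (n * (b - 1)) = ⌊x⌋₊ := by
    rw [← Nat.floor_div_eq_div (K := ℝ)]
    push_cast [Nat.cast_sub (by omega : 1 ≤ b)]
    rfl
  have hb' : (1 : ℝ) ≤ b := by exact_mod_cast (by omega : 1 ≤ b)
  constructor
  · calc ENNReal.ofReal ((b : ℝ) ^ (x - 1)) ≤ ENNReal.ofReal ((b ^ ⌊x⌋₊ : ℕ) : ℝ) :=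
          ENNReal.ofReal_le_ofReal (by exact_mod_cast Real.rpow_sub_one_le_pow_floor hb' x)
      _ = ((b ^ (s / (n * (b - 1))) : ℕ) : ℝ≥0∞) := by rw [ENNReal.ofReal_natCast, hq]
      _ ≤ expansion (gens n ∪ placeMacros n b) s := pow_le_expansion_placeMacros hb hs
  · calc expansion (gens n ∪ placeMacros n b) s
          ≤ ((n * b ^ (s / (n * (b - 1)) + 1) : ℕ) : ℝ≥0∞) := expansion_placeMacros_le hn hb s
      _ = ENNReal.ofReal (n * b * (b : ℝ) ^ ⌊x⌋₊) := by
          rw [← ENNReal.ofReal_natCast, hq]; push_cast; ring_nf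
      _ ≤ ENNReal.ofReal (n * b * (b : ℝ) ^ x) :=
          ENNReal.ofReal_le_ofReal (mul_le_mul_of_nonneg_left
            (Real.pow_floor_le_rpow hb' (by positivity)) (by positivity))
end

section
/- Let b ≥ 2 be an integer and let M = { b^j · a_i : 1 ≤ i ≤ n, j ≥ 1 } ⊆ A_n. For every integer k ≥ 1, the element w_k = (b^k − 1)(a_1 + ⋯ + a_n) satisfies |w_k|_G = n(b^k − 1) and |w_k|_{G'} = n(b−1)k; that is, the minimum number of elements of G' summing to w_k is exactly n(b−1)k. -/
open scoped ENNReal BigOperators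

/-!
Every element of `G ∪ M` has the form `b ^ e • a_i` with `e ≥ 0`, so a `G'`-word for `w` splits
coordinatewise into representations of each `w i` as a sum of powers of `b`. The fewest powers
of `b` summing to `N` is the base-`b` digit sum of `N`: merging `b` equal powers `b ^ e` into
`b ^ (e + 1)` shortens a representation, and a representation using each power fewer than `b`
times is the base-`b` expansion. Finally `b ^ k - 1` has `k` digits, all equal to `b - 1`.
-/

namespace Nat

theorem digits_sum_of_pos {b N : ℕ} (hb : 1 < b) (hN : 0 < N) :
    (b.digits N).sum = N % b + (b.digits (N / b)).sum := by
  rw [digits_def' hb hN, List.sum_cons]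

theorem digits_sum_pow_sub_one {b : ℕ} (hb : 1 < b) (k : ℕ) :
    (b.digits (b ^ k - 1)).sum = (b - 1) * k := by
  induction k with
  | zero => simp
  | succ k ih =>
    have hpos : 0 < b ^ k := by positivity
    have hsplit : b ^ (k + 1) - 1 = (b - 1) + b * (b ^ k - 1) := by
      rw [pow_succ', Nat.mul_sub, mul_one]
      have : b ≤ b * b ^ k := Nat.le_mul_of_pos_right b hpos
      omega
    rw [hsplit, digits_add b hb _ _ (by omega) (by omega), List.sum_cons, ih]
    ring

theorem exists_pow_multiset_card_eq_digits_sum {b : ℕ} (hb : 1 < b) (N : ℕ) :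
    ∃ v : Multiset ℕ, (∀ x ∈ v, ∃ e, x = b ^ e) ∧ v.sum = N ∧ v.card = (b.digits N).sum := by
  induction N using Nat.strong_induction_on with
  | _ N ih =>
    rcases N.eq_zero_or_pos with rfl | hN
    · exact ⟨0, by simp⟩
    obtain ⟨v, hv, hsum, hcard⟩ := ih (N / b) (Nat.div_lt_self hN hb)
    refine ⟨Multiset.replicate (N % b) 1 + v.map (b * ·), ?_, ?_, ?_⟩
    · simp only [Multiset.mem_add, Multiset.mem_replicate, Multiset.mem_map]
      rintro x (⟨-, rfl⟩ | ⟨y, hy, rfl⟩)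
      · exact ⟨0, rfl⟩
      · obtain ⟨e, rfl⟩ := hv y hy
        exact ⟨e + 1, Nat.pow_succ'.symm⟩
    · rw [Multiset.sum_add, Multiset.sum_replicate, Multiset.sum_map_mul_left, Multiset.map_id',
        hsum, smul_eq_mul, mul_one, Nat.mod_add_div]
    · rw [Multiset.card_add, Multiset.card_replicate, Multiset.card_map, hcard,
        digits_sum_of_pos hb hN]

theorem exists_pow_eq_replicate_one_add_map_mul {b : ℕ} (hb : 1 < b) (v : Multiset ℕ)
    (hv : ∀ x ∈ v, ∃ e, x = b ^ e) :
    ∃ w : Multiset ℕ, (∀ x ∈ w, ∃ e, x = b ^ e) ∧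
      v = Multiset.replicate (v.count 1) 1 + w.map (b * ·) := by
  have hshift : ∀ x ∈ v.filter (· ≠ 1), ∃ e, x = b * b ^ e := by
    intro x hx
    rw [Multiset.mem_filter] at hx
    obtain ⟨e, rfl⟩ := hv x hx.1
    obtain ⟨e, rfl⟩ : ∃ e', e = e' + 1 := Nat.exists_eq_add_one.mpr
      (Nat.pos_of_ne_zero fun he => hx.2 (by rw [he, pow_zero]))
    exact ⟨e, Nat.pow_succ'⟩
  refine ⟨(v.filter (· ≠ 1)).map (· / b), ?_, ?_⟩
  · simp only [Multiset.mem_map]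
    rintro _ ⟨x, hx, rfl⟩
    obtain ⟨e, rfl⟩ := hshift x hx
    exact ⟨e, Nat.mul_div_cancel_left _ (by omega)⟩
  · rw [Multiset.map_map, Multiset.map_congr rfl fun x hx => ?_, Multiset.map_id',
      ← Multiset.filter_eq', Multiset.filter_add_not]
    obtain ⟨e, rfl⟩ := hshift x hx
    simp only [Function.comp_apply, Nat.mul_div_cancel_left _ (by omega : 0 < b)]

theorem digits_sum_le_card {b : ℕ} (hb : 1 < b) (v : Multiset ℕ)
    (hv : ∀ x ∈ v, ∃ e, x = b ^ e) : (b.digits v.sum).sum ≤ v.card := by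
  induction hm : v.sum + v.card using Nat.strong_induction_on generalizing v with
  | _ m ih =>
    subst hm
    by_cases hones : b ≤ v.count 1
    · -- merge `b` ones into a single `b`: same sum, smaller count
      obtain ⟨w, rfl⟩ : ∃ w, v = Multiset.replicate b 1 + w :=
        Multiset.le_iff_exists_add.mp (Multiset.le_count_iff_replicate_le.mp hones)
      have hw : ∀ x ∈ b ::ₘ w, ∃ e, x = b ^ e := by
        simp only [Multiset.mem_cons]
        rintro x (rfl | hx)
        · exact ⟨1, (pow_one x).symm⟩
        · exact hv x (Multiset.mem_add.mpr (Or.inr hx))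
      have hsum : (b ::ₘ w).sum = (Multiset.replicate b 1 + w).sum := by simp
      have hcard : (b ::ₘ w).card < (Multiset.replicate b 1 + w).card := by
        simp only [Multiset.card_cons, Multiset.card_add, Multiset.card_replicate]; omega
      have := ih _ (by omega) (b ::ₘ w) hw rfl
      rw [hsum] at this
      omega
    · -- the ones are the last digit, the rest is `b` times a representation of `v.sum / b`
      obtain ⟨w, hw, hvw⟩ := exists_pow_eq_replicate_one_add_map_mul hb v hv
      set c := v.count 1
      have hsum : v.sum = c + b * w.sum := by
        rw [hvw, Multiset.sum_add, Multiset.sum_replicate, smul_eq_mul, mul_one,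
          Multiset.sum_map_mul_left, Multiset.map_id']
      have hcard : v.card = c + w.card := by
        rw [hvw]; simp
      rcases v.sum.eq_zero_or_pos with hzero | hpos
      · simp [hzero]
      have hmod : v.sum % b = c := by
        rw [hsum, Nat.add_mul_mod_self_left, Nat.mod_eq_of_lt (by omega)]
      have hdiv : v.sum / b = w.sum := by
        rw [hsum, Nat.add_mul_div_left _ _ (by omega), Nat.div_eq_of_lt (by omega), zero_add]
      have hw_lt : w.sum < v.sum := by nlinarith
      have := ih _ (by omega) w hw rfl
      rw [digits_sum_of_pos hb hpos, hmod, hdiv]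
      omega

end Nat

def powerSingles (n b : ℕ) : Set (Fin n → ℕ) := {x | ∃ i e, x = Pi.single i (b ^ e)}

theorem gens_union_eq_powerSingles (n b : ℕ) :
    gens n ∪ {w | ∃ i : Fin n, ∃ j : ℕ, 1 ≤ j ∧ w = fun t => if t = i then b ^ j else 0} =
      powerSingles n b := by
  simp only [gens, powerSingles, ← Pi.single_apply]
  ext x
  constructor
  · rintro (⟨i, rfl⟩ | ⟨i, j, -, rfl⟩)
    exacts [⟨i, 0, by rw [pow_zero]⟩, ⟨i, j, rfl⟩]
  · rintro ⟨i, e, rfl⟩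
    rcases e.eq_zero_or_pos with rfl | he
    exacts [Or.inl ⟨i, by rw [pow_zero]⟩, Or.inr ⟨i, e, he, rfl⟩]

theorem card_eq_sum_card_filter_apply_ne_zero {n : ℕ} (l : Multiset (Fin n → ℕ))
    (hl : ∀ x ∈ l, ∃ j c, c ≠ 0 ∧ x = Pi.single j c) :
    l.card = ∑ i, ((l.map (· i)).filter (· ≠ 0)).card := by
  induction l using Multiset.induction_on with
  | empty => simp
  | cons x l ih =>
    obtain ⟨j, c, hc, rfl⟩ := hl x (Multiset.mem_cons_self x l)
    have hstep : ∀ i, (((Pi.single j c ::ₘ l).map (· i)).filter (· ≠ 0)).card =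
        ((l.map (· i)).filter (· ≠ 0)).card + if j = i then 1 else 0 := by
      intro i
      rcases eq_or_ne j i with rfl | hji
      · simp [hc]
      · simp [hji, hji.symm]
    rw [Multiset.card_cons, ih fun y hy => hl y (Multiset.mem_cons_of_mem hy),
      Finset.sum_congr rfl fun i _ => hstep i, Finset.sum_add_distrib, Finset.sum_ite_eq,
      if_pos (Finset.mem_univ j)]

theorem sum_filter_apply_ne_zero {n : ℕ} (l : Multiset (Fin n → ℕ)) (i : Fin n) :
    ((l.map (· i)).filter (· ≠ 0)).sum = l.sum i := by
  have hzero : ((l.map (· i)).filter (¬ · ≠ 0)).sum = 0 := Multiset.sum_eq_zero (by simp)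
  rw [Pi.multiset_sum_apply, ← Multiset.sum_filter_add_sum_filter_not (s := l.map (· i)) (· ≠ 0),
    hzero, add_zero]

theorem slen_powerSingles {n b : ℕ} (hb : 1 < b) (w : Fin n → ℕ) :
    slen (powerSingles n b) w = ((∑ i, (b.digits (w i)).sum : ℕ) : ℕ∞) := by
  apply le_antisymm
  · choose v hv hsum hcard using fun i => Nat.exists_pow_multiset_card_eq_digits_sum hb (w i)
    refine sInf_le ⟨∑ i, (v i).map (Pi.single i), ?_, ?_, ?_⟩
    · intro x hx
      obtain ⟨i, -, hx⟩ := Multiset.mem_sum.mp hx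
      obtain ⟨y, hy, rfl⟩ := Multiset.mem_map.mp hx
      obtain ⟨e, rfl⟩ := hv i y hy
      exact ⟨i, e, rfl⟩
    · have hsingle : ∀ i, ((v i).map (Pi.single i)).sum = (Pi.single i (w i) : Fin n → ℕ) :=
        fun i => by
          rw [← hsum i]
          exact (map_multiset_sum (AddMonoidHom.single (fun _ => ℕ) i) (v i)).symm
      rw [Multiset.sum_sum, Finset.sum_congr rfl fun i _ => hsingle i, Finset.univ_sum_single]
    · simp only [Multiset.card_sum, Multiset.card_map, hcard]
  · refine le_sInf ?_
    rintro _ ⟨l, hl, rfl, rfl⟩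
    have hsingles : ∀ x ∈ l, ∃ j c, c ≠ 0 ∧ x = Pi.single j c := fun x hx => by
      obtain ⟨j, e, rfl⟩ := hl x hx
      exact ⟨j, b ^ e, by positivity, rfl⟩
    have hpow : ∀ i, ∀ y ∈ (l.map (· i)).filter (· ≠ 0), ∃ e, y = b ^ e := by
      intro i y hy
      obtain ⟨⟨x, hx, rfl⟩, hy⟩ := Multiset.mem_filter.mp hy |>.imp_left Multiset.mem_map.mp
      obtain ⟨j, e, rfl⟩ := hl x hx
      rcases eq_or_ne j i with rfl | hji
      · exact ⟨e, Pi.single_eq_same _ _⟩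
      · exact absurd (Pi.single_eq_of_ne' hji _) hy
    rw [Nat.cast_le, card_eq_sum_card_filter_apply_ne_zero l hsingles]
    refine Finset.sum_le_sum fun i _ => ?_
    rw [← sum_filter_apply_ne_zero]
    exact Nat.digits_sum_le_card hb _ (hpow i)

theorem hard_element_exact_length_general
    (n b : ℕ) (hb : 2 ≤ b)
    (M : Set (Fin n → ℕ))
    (hM : M = {w | ∃ i : Fin n, ∃ j : ℕ, 1 ≤ j ∧ w = fun t => if t = i then b ^ j else 0}) :
    ∀ k : ℕ, 1 ≤ k →
      glen (fun _ : Fin n => b ^ k - 1) = n * (b ^ k - 1) ∧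
      slen (gens n ∪ M) (fun _ : Fin n => b ^ k - 1) = ((n * (b - 1) * k : ℕ) : ℕ∞) := by
  intro k _
  refine ⟨by simp [glen], ?_⟩
  rw [hM, gens_union_eq_powerSingles, slen_powerSingles hb, Nat.digits_sum_pow_sub_one hb]
  simp [mul_assoc]

/-- **A hard-to-compress element.**
For the place-notation macro set `M = { b^j · a_i : 1 ≤ i ≤ n, j ≥ 1 }` and any `k ≥ 1`,
the element `w_k = (b^k - 1)(a_1 + ⋯ + a_n)` (i.e. the constant vector with all
coordinates `b^k - 1`) satisfies `|w_k|_G = n(b^k - 1)` and `|w_k|_{G'} = n(b-1)k`. -/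
theorem hard_element_exact_length
    (n b : ℕ) (hn : 1 ≤ n) (hb : 2 ≤ b)
    (M : Set (Fin n → ℕ))
    (hM : M = {w | ∃ i : Fin n, ∃ j : ℕ, 1 ≤ j ∧ w = fun t => if t = i then b ^ j else 0}) :
    ∀ k : ℕ, 1 ≤ k →
      glen (fun _ : Fin n => b ^ k - 1) = n * (b ^ k - 1) ∧
      slen (gens n ∪ M) (fun _ : Fin n => b ^ k - 1) = ((n * (b - 1) * k : ℕ) : ℕ∞) :=
  hard_element_exact_length_general n b hb M hM
end

section
/- Let M ⊆ A_n be a macro set whose growth is polylogarithmic: |M ∩ B_G(r)| ≤ c(log(e + r))^q for all r ≥ 0, for some constants c, q > 0. Then there exists a constant K > 0 depending only on n, c, q such that f_{G'}(s) ≤ exp(K · s · log s) for all integers s ≥ 2. -/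
open scoped ENNReal BigOperators

/-!
If `B_G(r) ⊆ B_{G'}(s)`, every `w ∈ B_G(r)` is a sum of exactly `s` elements of
`T_r = {0} ∪ G ∪ (M ∩ B_G(r))`, because the summands of `w` are no longer than `w`. Counting gives
`r + 1 ≤ |B_G(r)| ≤ |T_r| ^ s ≤ ((1 + n + c) log (e + r) ^ q) ^ s`, so `R = log (r + 1)` satisfies
the implicit inequality `R ≤ s A + s q log (1 + R)` with `A = log (1 + n + c)`, which forces
`R = O(s log s)`.
-/

open scoped Pointwise
open Real

section Counting

lemma Multiset.sum_mem_card_nsmul {α : Type*} [AddCommMonoid α] {T : Set α} {l : Multiset α}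
    (hl : ∀ x ∈ l, x ∈ T) : l.sum ∈ Multiset.card l • T := by
  induction l using Multiset.induction with
  | empty => simp
  | cons a l ih =>
    rw [Multiset.sum_cons, Multiset.card_cons, succ_nsmul']
    exact Set.add_mem_add (hl a (Multiset.mem_cons_self a l))
      (ih fun x hx => hl x (Multiset.mem_cons_of_mem hx))

lemma Set.ncard_le_ncard_pow_of_subset_nsmul {α : Type*} [AddMonoid α] {B T : Set α}
    (hT : T.Finite) {s : ℕ} (h : B ⊆ s • T) : B.ncard ≤ T.ncard ^ s := by
  classical
  lift T to Finset α using hT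
  rw [← Finset.coe_nsmul] at h
  calc B.ncard ≤ (s • T).card := (Set.ncard_le_ncard h (Finset.finite_toSet _)).trans_eq
        (Set.ncard_coe_finset _)
    _ ≤ T.card ^ s := Finset.card_nsmul_le
    _ = (T : Set α).ncard ^ s := by rw [Set.ncard_coe_finset]

end Counting

section Lengths

variable {n : ℕ}

def glenBall (n r : ℕ) : Set (Fin n → ℕ) := {w | glen w ≤ r}

lemma glen_mono : Monotone (glen (n := n)) :=
  fun _ _ h => Finset.sum_le_sum fun j _ => h j

lemma glen_le_glen_sum {l : Multiset (Fin n → ℕ)} {x : Fin n → ℕ} (hx : x ∈ l) :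
    glen x ≤ glen l.sum :=
  glen_mono (Multiset.le_sum_of_mem hx)

lemma glen_pi_single (i : Fin n) (k : ℕ) : glen (Pi.single i k) = k := by
  simp [glen, Finset.sum_pi_single']

lemma finite_glenBall (n r : ℕ) : (glenBall n r).Finite :=
  (Set.finite_Iic (fun _ => r : Fin n → ℕ)).subset fun w hw j =>
    (Finset.single_le_sum (fun i _ => Nat.zero_le (w i)) (Finset.mem_univ j)).trans hw

lemma le_ncard_glenBall (hn : 0 < n) (r : ℕ) : r + 1 ≤ (glenBall n r).ncard := by
  let i : Fin n := ⟨0, hn⟩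
  have hsub : Pi.single i '' Set.Iic r ⊆ glenBall n r := by
    rintro _ ⟨k, hk, rfl⟩
    simpa [glenBall, glen_pi_single] using hk
  calc r + 1 = (Set.Iic r).ncard := by simp
    _ = (Pi.single i '' Set.Iic r).ncard :=
      (Set.ncard_image_of_injective _ (Pi.single_injective (M := fun _ : Fin n => ℕ) i)).symm
    _ ≤ (glenBall n r).ncard := Set.ncard_le_ncard hsub (finite_glenBall n r)

lemma exists_multiset_of_slen_le {S : Set (Fin n → ℕ)} {w : Fin n → ℕ} {s : ℕ}
    (h : slen S w ≤ s) :
    ∃ l : Multiset (Fin n → ℕ), (∀ x ∈ l, x ∈ S) ∧ l.sum = w ∧ Multiset.card l ≤ s := by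
  have hne : {k : ℕ∞ | ∃ l : Multiset (Fin n → ℕ),
      (∀ x ∈ l, x ∈ S) ∧ l.sum = w ∧ (l.card : ℕ∞) = k}.Nonempty := by
    by_contra hempty
    rw [Set.not_nonempty_iff_eq_empty] at hempty
    simp [slen, hempty] at h
  obtain ⟨l, hS, hsum, hcard⟩ := csInf_mem hne
  exact ⟨l, hS, hsum, by exact_mod_cast hcard.trans_le h⟩

lemma mem_nsmul_of_slen_le {S : Set (Fin n → ℕ)} {r s : ℕ} {w : Fin n → ℕ}
    (hw : w ∈ glenBall n r) (h : slen S w ≤ s) :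
    w ∈ s • insert 0 (S ∩ glenBall n r) := by
  obtain ⟨l, hS, rfl, hcard⟩ := exists_multiset_of_slen_le h
  have hmem : l.sum ∈ Multiset.card l • (S ∩ glenBall n r) :=
    Multiset.sum_mem_card_nsmul fun x hx => ⟨hS x hx, (glen_le_glen_sum hx).trans hw⟩
  exact Set.nsmul_subset_nsmul (Set.subset_insert _ _) (Set.mem_insert _ _) hcard hmem

lemma ncard_glenBall_le_pow {S : Set (Fin n → ℕ)} {r s : ℕ}
    (h : ∀ w, glen w ≤ r → slen S w ≤ s) :
    (glenBall n r).ncard ≤ (insert 0 (S ∩ glenBall n r)).ncard ^ s := by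
  have hfin : (insert 0 (S ∩ glenBall n r)).Finite :=
    ((finite_glenBall n r).subset Set.inter_subset_right).insert 0
  exact Set.ncard_le_ncard_pow_of_subset_nsmul hfin fun w hw => mem_nsmul_of_slen_le hw (h w hw)

lemma gens_eq_range (n : ℕ) : gens n = Set.range fun i : Fin n => Pi.single i 1 := by
  ext w
  simp only [gens, Set.mem_ofPred_eq, Set.mem_range]
  refine exists_congr fun i => ?_
  rw [eq_comm]
  constructor <;> (rintro rfl; ext t; simp [Pi.single_apply])

lemma finite_gens (n : ℕ) : (gens n).Finite := by
  rw [gens_eq_range]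
  exact Set.finite_range _

lemma ncard_gens_le (n : ℕ) : (gens n).ncard ≤ n := by
  rw [gens_eq_range, ← Set.image_univ]
  exact (Set.ncard_image_le Set.finite_univ).trans (by simp)

lemma ncard_insert_zero_inter_glenBall_le (M : Set (Fin n → ℕ)) (r : ℕ) :
    (insert 0 ((gens n ∪ M) ∩ glenBall n r)).ncard ≤ n + (M ∩ glenBall n r).ncard + 1 := by
  rw [Set.union_inter_distrib_right]
  calc _ ≤ (gens n ∩ glenBall n r ∪ M ∩ glenBall n r).ncard + 1 := Set.ncard_insert_le _ _
    _ ≤ (gens n ∩ glenBall n r).ncard + (M ∩ glenBall n r).ncard + 1 := by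
      gcongr; exact Set.ncard_union_le _ _
    _ ≤ n + (M ∩ glenBall n r).ncard + 1 := by
      gcongr
      exact (Set.ncard_inter_le_ncard_left _ _ (finite_gens n)).trans (ncard_gens_le n)

end Lengths

section Bootstrap

lemma log_exp_one_add_le {x : ℝ} (hx : 0 ≤ x) : log (exp 1 + x) ≤ 1 + log (x + 1) := by
  have he : 1 ≤ exp 1 := one_le_exp zero_le_one
  calc log (exp 1 + x) ≤ log (exp 1 * (x + 1)) := log_le_log (by positivity) (by nlinarith)
    _ = 1 + log (x + 1) := by
      rw [log_mul (exp_pos 1).ne' (by positivity : (0 : ℝ) < x + 1).ne', log_exp]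

lemma one_le_log_exp_one_add {x : ℝ} (hx : 0 ≤ x) : 1 ≤ log (exp 1 + x) := by
  rw [le_log_iff_exp_le (by positivity)]
  linarith

lemma le_of_le_add_mul_log_one_add {R α β : ℝ} (hR : 0 ≤ R) (hα : 0 ≤ α) (hβ : 0 ≤ β)
    (h : R ≤ α + β * log (1 + R)) : R ≤ α + β * (2 * log (1 + α + 2 * β)) := by
  -- with `u = √(1 + R)`, `log (1 + R) = 2 log u ≤ 2 u` turns `h` into a quadratic bound on `u`
  set u := √(1 + R)
  have hu1 : 1 ≤ u := one_le_sqrt.2 (by linarith)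
  have hlog : log (1 + R) = 2 * log u := by
    rw [← sq_sqrt (by linarith : 0 ≤ 1 + R), log_pow]
    push_cast
    ring
  have hu : u ≤ 1 + α + 2 * β := by
    have hlogu : log u ≤ u - 1 := log_le_sub_one_of_pos (by linarith)
    have hu2 : u ^ 2 = 1 + R := sq_sqrt (by linarith)
    have : u * u ≤ u * (1 + α + 2 * β) := by nlinarith
    exact le_of_mul_le_mul_left this (by linarith)
  calc R ≤ α + β * (2 * log u) := hlog ▸ h
    _ ≤ α + β * (2 * log (1 + α + 2 * β)) := by gcongr

/-- Read off from `R ≤ s A + 2 s q (log s + log (1 + A + 2 q))`, using `1 ≤ log s / log 2`. -/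
noncomputable def expansionExponent (A q : ℝ) : ℝ :=
  (A + 2 * q * log (1 + A + 2 * q)) / log 2 + 2 * q

lemma expansionExponent_pos {A q : ℝ} (hA : 0 ≤ A) (hq : 0 < q) : 0 < expansionExponent A q := by
  have : 0 ≤ log (1 + A + 2 * q) := log_nonneg (by linarith)
  unfold expansionExponent
  positivity

lemma le_expansionExponent_mul_mul_log {R A q s : ℝ} (hR : 0 ≤ R) (hA : 0 ≤ A) (hq : 0 ≤ q)
    (hs : 2 ≤ s) (h : R ≤ s * A + s * q * log (1 + R)) :
    R ≤ expansionExponent A q * s * log s := by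
  set X := A + 2 * q * log (1 + A + 2 * q)
  have hbound := le_of_le_add_mul_log_one_add hR (by positivity) (by positivity) h
  have hlog : log (1 + s * A + 2 * (s * q)) ≤ log s + log (1 + A + 2 * q) := by
    rw [← log_mul (by positivity) (by positivity)]
    exact log_le_log (by positivity) (by nlinarith)
  have hX : X ≤ X / log 2 * log s := by
    have hlog2 : 0 < log 2 := log_pos one_lt_two
    have hX0 : 0 ≤ X := by have := log_nonneg (by linarith : 1 ≤ 1 + A + 2 * q); positivity
    rw [div_mul_eq_mul_div, le_div_iff₀ hlog2]
    exact mul_le_mul_of_nonneg_left (log_le_log two_pos hs) hX0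
  have h1 := mul_le_mul_of_nonneg_left hlog (by positivity : 0 ≤ s * q)
  have h2 := mul_le_mul_of_nonneg_left hX (by positivity : 0 ≤ s)
  unfold expansionExponent
  linarith

lemma log_add_one_le_of_le_pow {x m a q : ℝ} {s : ℕ} (hx : 0 ≤ x) (hm : 0 < m) (hq : 0 ≤ q)
    (hpow : x + 1 ≤ m ^ s) (hma : m ≤ a * log (exp 1 + x) ^ q) :
    log (x + 1) ≤ s * log a + s * q * log (1 + log (x + 1)) := by
  have hL := one_le_log_exp_one_add hx
  have hLq : 0 < log (exp 1 + x) ^ q := by positivity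
  have ha : a ≠ 0 := by rintro rfl; linarith [zero_mul (log (exp 1 + x) ^ q)]
  have hlogm : log m ≤ log a + q * log (1 + log (x + 1)) := calc
    log m ≤ log (a * log (exp 1 + x) ^ q) := log_le_log hm hma
    _ = log a + q * log (log (exp 1 + x)) := by rw [log_mul ha hLq.ne', log_rpow (by linarith)]
    _ ≤ log a + q * log (1 + log (x + 1)) := by
      gcongr
      exact log_exp_one_add_le hx
  calc log (x + 1) ≤ log (m ^ s) := log_le_log (by linarith) hpow
    _ = s * log m := log_pow m s
    _ ≤ s * log a + s * q * log (1 + log (x + 1)) := by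
      have := mul_le_mul_of_nonneg_left hlogm s.cast_nonneg
      linarith

end Bootstrap

/-- **Polylogarithmic density gives at most quasi-exponential expansion.**
If the macro set `M ⊆ A_n` satisfies `|M ∩ B_G(r)| ≤ c(log(e + r))^q` for all `r ≥ 0`
(with constants `c, q > 0`), then there is `K > 0` depending only on `n, c, q` such that
`f_{G'}(s) ≤ exp(K·s·log s)` for all `s ≥ 2`. -/
theorem polylog_density_quasiexponential_expansion
    (n : ℕ) (hn : 1 ≤ n) (c q : ℝ) (hc : 0 < c) (hq : 0 < q)
    (M : Set (Fin n → ℕ))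
    (hM : ∀ r : ℕ, ((M ∩ {w | glen w ≤ r}).ncard : ℝ)
            ≤ c * (Real.log (Real.exp 1 + r)) ^ q) :
    ∃ K : ℝ, 0 < K ∧ ∀ s : ℕ, 2 ≤ s →
      expansion (gens n ∪ M) s ≤ ENNReal.ofReal (Real.exp (K * s * Real.log s)) := by
  refine ⟨expansionExponent (log (1 + n + c)) q,
    expansionExponent_pos (log_nonneg (by linarith)) hq, fun s hs => sSup_le ?_⟩
  rintro _ ⟨r, rfl, hball⟩
  set m := (insert 0 ((gens n ∪ M) ∩ glenBall n r)).ncard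
  have hcount : r + 1 ≤ m ^ s := (le_ncard_glenBall hn r).trans (ncard_glenBall_le_pow hball)
  have hm : 0 < m := Nat.pos_of_ne_zero fun h => by simp [h, show s ≠ 0 by omega] at hcount
  have hm_le : (m : ℝ) ≤ (1 + n + c) * log (exp 1 + r) ^ q := by
    have hT : (m : ℝ) ≤ n + (M ∩ glenBall n r).ncard + 1 := by
      exact_mod_cast ncard_insert_zero_inter_glenBall_le M r
    have hMr : ((M ∩ glenBall n r).ncard : ℝ) ≤ c * log (exp 1 + r) ^ q := hM r
    have hL : 1 ≤ log (exp 1 + r) ^ q :=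
      one_le_rpow (one_le_log_exp_one_add r.cast_nonneg) hq.le
    nlinarith
  have hlog : log (r + 1) ≤ _ * s * log s :=
    le_expansionExponent_mul_mul_log (log_nonneg (by simp)) (log_nonneg (by linarith)) hq.le
      (by exact_mod_cast hs)
      (log_add_one_le_of_le_pow r.cast_nonneg (by exact_mod_cast hm) hq.le
        (by exact_mod_cast hcount) hm_le)
  rw [← ENNReal.ofReal_natCast]
  exact ENNReal.ofReal_le_ofReal
    ((le_add_of_nonneg_right zero_le_one).trans ((log_le_iff_le_exp (by positivity)).1 hlog))
end

section
/- Let M = { m^2 · a_i : 1 ≤ i ≤ n, m ≥ 1 } ⊆ A_n be the macro set of squares. Then every element w ∈ A_n satisfies |w|_{G'} ≤ 4n, i.e., every w ∈ ℕ^n is a sum of at most 4n elements of G' = G ∪ M; consequently f_{G'}(s) = ∞ for all s ≥ 4n. -/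
open scoped ENNReal BigOperators

/-! By Lagrange every `c ∈ ℕ` is a sum of four squares, so `c · a_i` is a sum of at most four
macros `m² · a_i` (squares `0²` contribute nothing). Writing `w = ∑ᵢ wᵢ · a_i` and using
subadditivity of the word length gives `|w|_{G'} ≤ 4n`, uniformly in `w`; hence every `G`-ball
lies in the `G'`-ball of radius `4n`. -/

section WordLength

variable {n : ℕ} {S : Set (Fin n → ℕ)}

lemma slen_le_card {l : Multiset (Fin n → ℕ)} (hl : ∀ x ∈ l, x ∈ S) : slen S l.sum ≤ l.card :=
  sInf_le ⟨l, hl, rfl, rfl⟩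

lemma exists_multiset_card_eq_slen {w : Fin n → ℕ} (hw : slen S w ≠ ⊤) :
    ∃ l : Multiset (Fin n → ℕ), (∀ x ∈ l, x ∈ S) ∧ l.sum = w ∧ (l.card : ℕ∞) = slen S w := by
  have hne : {k : ℕ∞ | ∃ l : Multiset (Fin n → ℕ),
      (∀ x ∈ l, x ∈ S) ∧ l.sum = w ∧ (l.card : ℕ∞) = k}.Nonempty := by
    refine Set.nonempty_iff_ne_empty.2 fun hempty => hw ?_
    rw [slen, hempty, sInf_empty]
  exact csInf_mem hne

lemma slen_zero_le : slen S 0 ≤ 0 := by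
  simpa using slen_le_card (S := S) (l := 0) (by simp)

lemma slen_add_le (v w : Fin n → ℕ) : slen S (v + w) ≤ slen S v + slen S w := by
  rcases eq_or_ne (slen S v) ⊤ with hv | hv
  · simp [hv]
  rcases eq_or_ne (slen S w) ⊤ with hw | hw
  · simp [hw]
  obtain ⟨lv, hlvS, hlv, hcardv⟩ := exists_multiset_card_eq_slen hv
  obtain ⟨lw, hlwS, hlw, hcardw⟩ := exists_multiset_card_eq_slen hw
  have hS : ∀ x ∈ lv + lw, x ∈ S := by
    simpa only [Multiset.mem_add, or_imp, forall_and] using ⟨hlvS, hlwS⟩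
  calc slen S (v + w) = slen S (lv + lw).sum := by rw [Multiset.sum_add, hlv, hlw]
    _ ≤ (lv + lw).card := slen_le_card hS
    _ = slen S v + slen S w := by rw [Multiset.card_add, Nat.cast_add, hcardv, hcardw]

lemma slen_sum_le {ι : Type*} (s : Finset ι) (f : ι → Fin n → ℕ) :
    slen S (∑ i ∈ s, f i) ≤ ∑ i ∈ s, slen S (f i) :=
  Finset.le_sum_of_subadditive (slen S) slen_zero_le slen_add_le s f

lemma expansion_eq_top_of_forall_slen_le {s : ℕ} (h : ∀ w, slen S w ≤ s) :
    expansion S s = ⊤ := by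
  refine sSup_eq_top.2 fun b hb => ?_
  obtain ⟨r, hr⟩ := ENNReal.exists_nat_gt hb.ne
  exact ⟨r, ⟨r, rfl, fun w _ => h w⟩, hr⟩

lemma slen_single_sq_le_one (hS : ∀ (i : Fin n) (m : ℕ), 1 ≤ m → Pi.single i (m ^ 2) ∈ S)
    (i : Fin n) (m : ℕ) : slen S (Pi.single i (m ^ 2)) ≤ 1 := by
  rcases Nat.eq_zero_or_pos m with rfl | hm
  · simpa using slen_zero_le.trans (zero_le_one' ℕ∞)
  · simpa using slen_le_card (S := S) (l := {Pi.single i (m ^ 2)}) (by simpa using hS i m hm)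

lemma slen_single_le_four (hS : ∀ (i : Fin n) (m : ℕ), 1 ≤ m → Pi.single i (m ^ 2) ∈ S)
    (i : Fin n) (c : ℕ) : slen S (Pi.single i c) ≤ 4 := by
  obtain ⟨a, b, d, e, rfl⟩ := Nat.sum_four_squares c
  have hsq := slen_single_sq_le_one hS i
  calc slen S (Pi.single i (a ^ 2 + b ^ 2 + d ^ 2 + e ^ 2))
      ≤ slen S (Pi.single i (a ^ 2 + b ^ 2 + d ^ 2)) + slen S (Pi.single i (e ^ 2)) := by
        rw [Pi.single_add]; exact slen_add_le _ _
    _ ≤ slen S (Pi.single i (a ^ 2 + b ^ 2)) + slen S (Pi.single i (d ^ 2)) + 1 := by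
        rw [Pi.single_add]; gcongr; exacts [slen_add_le _ _, hsq e]
    _ ≤ slen S (Pi.single i (a ^ 2)) + slen S (Pi.single i (b ^ 2)) + 1 + 1 := by
        rw [Pi.single_add]; gcongr; exacts [slen_add_le _ _, hsq d]
    _ ≤ 1 + 1 + 1 + 1 := by gcongr <;> apply hsq
    _ = 4 := by norm_num

lemma slen_le_four_mul_card (hS : ∀ (i : Fin n) (m : ℕ), 1 ≤ m → Pi.single i (m ^ 2) ∈ S)
    (w : Fin n → ℕ) : slen S w ≤ 4 * n :=
  calc slen S w = slen S (∑ i, Pi.single i (w i)) := by rw [Finset.univ_sum_single]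
    _ ≤ ∑ i, slen S (Pi.single i (w i)) := slen_sum_le _ _
    _ ≤ ∑ _i : Fin n, 4 := Finset.sum_le_sum fun i _ => slen_single_le_four hS i (w i)
    _ = 4 * n := by simp [mul_comm]

end WordLength

theorem square_macros_infinite_expansion_general
    (n : ℕ)
    (M : Set (Fin n → ℕ))
    (hM : M = {w | ∃ i : Fin n, ∃ m : ℕ, 1 ≤ m ∧ w = fun t => if t = i then m ^ 2 else 0}) :
    (∀ w : Fin n → ℕ, slen (gens n ∪ M) w ≤ ((4 * n : ℕ) : ℕ∞)) ∧
    (∀ s : ℕ, 4 * n ≤ s → expansion (gens n ∪ M) s = ⊤) := by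
  have hsq : ∀ (i : Fin n) (m : ℕ), 1 ≤ m → Pi.single i (m ^ 2) ∈ gens n ∪ M :=
    fun i m hm => Or.inr (hM ▸ ⟨i, m, hm, funext fun t => Pi.single_apply i _ t⟩)
  have hlen : ∀ w : Fin n → ℕ, slen (gens n ∪ M) w ≤ ((4 * n : ℕ) : ℕ∞) := fun w => by
    exact_mod_cast slen_le_four_mul_card hsq w
  exact ⟨hlen, fun s hs => expansion_eq_top_of_forall_slen_le fun w =>
    (hlen w).trans (by exact_mod_cast hs)⟩

/-- **Squares macros give infinite expansion (Lagrange).**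
For the macro set of squares `M = { m^2 · a_i : 1 ≤ i ≤ n, m ≥ 1 }`, every `w ∈ ℕ^n` is a
sum of at most `4n` elements of `G' = G ∪ M` (i.e. `|w|_{G'} ≤ 4n`); consequently
`f_{G'}(s) = ∞` for all `s ≥ 4n`. -/
theorem square_macros_infinite_expansion
    (n : ℕ) (hn : 1 ≤ n)
    (M : Set (Fin n → ℕ))
    (hM : M = {w | ∃ i : Fin n, ∃ m : ℕ, 1 ≤ m ∧ w = fun t => if t = i then m ^ 2 else 0}) :
    (∀ w : Fin n → ℕ, slen (gens n ∪ M) w ≤ ((4 * n : ℕ) : ℕ∞)) ∧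
    (∀ s : ℕ, 4 * n ≤ s → expansion (gens n ∪ M) s = ⊤) :=
  square_macros_infinite_expansion_general n M hM
end

section
/- Let n ≥ 2 and let M ⊆ F_n be a macro set containing at most c·ℓ^p macros of each G-length ℓ ≥ 2, for constants c > 0 and p ≥ 0. Then for any integer d ≥ 3 satisfying n^d > 4e(n + c)d^{p+1}, one has f_{G'}(s) < d·s for all integers s ≥ 1. In particular, a polynomial-density macro set yields only linear expansion: f_{G'}(s) = O(s). -/
open scoped ENNReal

/-- The single-letter generating set `G` of the free monoid `F_n` on `n` letters,
realized as lists over `Fin n`. -/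
def letters (n : ℕ) : Set (List (Fin n)) := {w | ∃ i : Fin n, w = [i]}

/-- The length of `w ∈ F_n` with respect to a generating set `S`: the minimum number `k`
such that `w` is a concatenation of `k` elements of `S`; `⊤` if `w` is not representable. -/
noncomputable def flen {n : ℕ} (S : Set (List (Fin n))) (w : List (Fin n)) : ℕ∞ :=
  sInf {k : ℕ∞ | ∃ L : List (List (Fin n)),
    (∀ x ∈ L, x ∈ S) ∧ L.flatten = w ∧ (L.length : ℕ∞) = k}

/-- The expansion function `f_{G'}(s) = sup { r ∈ ℕ : B_G(r) ⊆ B_{G'}(s) }` of the free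
monoid, valued in `ℝ≥0∞` (so `⊤` means the inclusion holds for every radius). -/
noncomputable def fexpansion {n : ℕ} (S : Set (List (Fin n))) (s : ℕ) : ℝ≥0∞ :=
  sSup {x : ℝ≥0∞ | ∃ r : ℕ, x = (r : ℝ≥0∞) ∧
    ∀ w : List (Fin n), w.length ≤ r → flen S w ≤ (s : ℕ∞)}

/-!
If every word of length `N = d s` had `G'`-length at most `s`, each of the `n^N` words would be
a concatenation of exactly `s` pieces taken from `G' ∪ {ε}` (of length at most `N`), and the
pieces determine the word. Weighting a piece `a` by `x^|a|` therefore gives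
`n^N x^N ≤ K(x)^s`, where `K(x) = ∑ x^|a|` is the generating function of the pieces. The density
bound gives `K(x) ≤ 1 + n x + c ∑ ℓ^p x^ℓ`, and for `x = (1 - 1/(2d)) e^{-p/d}` the estimate
`ℓ^p ≤ d^p e^{p(ℓ/d - 1)}` turns the polynomial sum into a geometric one, so that
`K(x) ≤ 4 (n + c) d^{p+1} x^d < (n x)^d`: a contradiction.
-/

open Finset

section Counting

variable {α : Type*}

theorem List.flatten_ofFn_getD_nil {s : ℕ} (L : List (List α)) (hL : L.length ≤ s) :
    (List.ofFn fun i : Fin s => L.getD i []).flatten = L.flatten := by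
  induction s generalizing L with
  | zero => simp_all
  | succ s ih =>
    cases L with
    | nil => simp
    | cons a L =>
      simp only [List.ofFn_succ, List.flatten_cons, Fin.val_zero, List.getD_cons_zero,
        Fin.val_succ, List.getD_cons_succ]
      rw [ih L (by simpa using hL)]

theorem exists_ofFn_flatten_eq {A : Set (List α)} (hnil : [] ∈ A) {s : ℕ}
    {L : List (List α)} (hL : ∀ a ∈ L, a ∈ A) (hlen : L.length ≤ s) :
    ∃ t : Fin s → List α, (∀ i, t i ∈ A) ∧ (List.ofFn t).flatten = L.flatten := by
  refine ⟨fun i => L.getD i [], fun i => ?_, L.flatten_ofFn_getD_nil hlen⟩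
  show L.getD i [] ∈ A
  by_cases hi : (i : ℕ) < L.length
  · rw [List.getD_eq_getElem _ _ hi]
    exact hL _ (List.getElem_mem hi)
  · rwa [List.getD_eq_default _ _ (not_lt.mp hi)]

theorem card_pow_mul_pow_le_sum_pow [Fintype α] (A : Finset (List α)) {x : ℝ} (hx : 0 ≤ x)
    {N s : ℕ} (hA : ∀ g : Fin N → α,
      ∃ t : Fin s → List α, (∀ i, t i ∈ A) ∧ (List.ofFn t).flatten = List.ofFn g) :
    (Fintype.card α : ℝ) ^ N * x ^ N ≤ (∑ a ∈ A, x ^ a.length) ^ s := by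
  classical
  choose t htA hflat using hA
  have ht_inj : Function.Injective t := fun g₁ g₂ h =>
    List.ofFn_injective (by rw [← hflat, h, hflat])
  have ht_len (g : Fin N → α) : ∑ i, (t g i).length = N := by
    simpa [List.sum_ofFn] using congrArg List.length (hflat g)
  calc (Fintype.card α : ℝ) ^ N * x ^ N = ∑ g : Fin N → α, ∏ i, x ^ (t g i).length := by
        simp [prod_pow_eq_pow_sum, ht_len]
    _ = ∑ h ∈ univ.image t, ∏ i, x ^ (h i).length :=
        (sum_image (f := fun h => ∏ i, x ^ (h i).length) fun _ _ _ _ h => ht_inj h).symm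
    _ ≤ ∑ h ∈ Fintype.piFinset fun _ : Fin s => A, ∏ i, x ^ (h i).length :=
        sum_le_sum_of_subset_of_nonneg
          (fun _ hh => by
            obtain ⟨g, -, rfl⟩ := mem_image.mp hh
            exact Fintype.mem_piFinset.mpr (htA g))
          (fun _ _ _ => by positivity)
    _ = (∑ a ∈ A, x ^ a.length) ^ s := by
        rw [← prod_univ_sum (fun _ => A) (fun _ a => x ^ a.length), prod_const, card_univ,
          Fintype.card_fin]

theorem card_filter_length_eq_le [Fintype α] (A : Finset (List α)) (ℓ : ℕ) :
    #(A.filter (·.length = ℓ)) ≤ Fintype.card α ^ ℓ := by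
  calc #(A.filter (·.length = ℓ)) = #(A.subtype (·.length = ℓ)) := (card_subtype _ _).symm
    _ ≤ Fintype.card (List.Vector α ℓ) := card_le_univ (α := List.Vector α ℓ) _
    _ = Fintype.card α ^ ℓ := card_vector ℓ

end Counting

section Length

variable {n : ℕ}

theorem exists_flatten_eq_of_flen_le {S : Set (List (Fin n))} {w : List (Fin n)} {s : ℕ}
    (h : flen S w ≤ s) :
    ∃ L : List (List (Fin n)), (∀ a ∈ L, a ∈ S) ∧ L.flatten = w ∧ L.length ≤ s := by
  have hne : {k : ℕ∞ | ∃ L : List (List (Fin n)),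
      (∀ a ∈ L, a ∈ S) ∧ L.flatten = w ∧ (L.length : ℕ∞) = k}.Nonempty := by
    by_contra hempty
    rw [Set.not_nonempty_iff_eq_empty] at hempty
    simp [flen, hempty] at h
  obtain ⟨L, hLS, hLw, hlen⟩ := csInf_mem hne
  exact ⟨L, hLS, hLw, by exact_mod_cast hlen.trans_le h⟩

theorem flen_le_length {S : Set (List (Fin n))} {L : List (List (Fin n))} (hL : ∀ a ∈ L, a ∈ S) :
    flen S L.flatten ≤ L.length :=
  sInf_le ⟨L, hL, rfl, rfl⟩

theorem fexpansion_lt_of_not_flen_le {S : Set (List (Fin n))} {s : ℕ} {w : List (Fin n)}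
    (hw : ¬ flen S w ≤ s) : fexpansion S s < w.length := by
  have hpos : 0 < w.length := by
    by_contra h0
    obtain rfl : w = [] := List.eq_nil_of_length_eq_zero (by omega)
    exact hw ((flen_le_length (L := []) (by simp)).trans (by simp))
  calc fexpansion S s ≤ (w.length - 1 : ℕ) := by
        refine sSup_le ?_
        rintro _ ⟨r, rfl, hr⟩
        have : r < w.length := lt_of_not_ge fun hle => hw (hr w hle)
        exact_mod_cast Nat.le_sub_one_of_lt this
    _ < w.length := by exact_mod_cast Nat.sub_lt hpos one_pos

end Length

section Weight

variable {n : ℕ} {M : Set (List (Fin n))} {c p : ℝ}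

theorem card_filter_length_eq_le_of_subset (A : Finset (List (Fin n)))
    (hAM : ∀ a ∈ A, 2 ≤ a.length → a ∈ M)
    (hM : ∀ ℓ : ℕ, 2 ≤ ℓ → (({m ∈ M | m.length = ℓ}).ncard : ℝ) ≤ c * (ℓ : ℝ) ^ p)
    {ℓ : ℕ} (hℓ : 2 ≤ ℓ) : (#(A.filter (·.length = ℓ)) : ℝ) ≤ c * (ℓ : ℝ) ^ p := by
  have hsub : (↑(A.filter (·.length = ℓ)) : Set (List (Fin n))) ⊆ {m ∈ M | m.length = ℓ} :=
    fun a ha => by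
      obtain ⟨haA, rfl⟩ := mem_filter.mp ha
      exact ⟨hAM a haA hℓ, rfl⟩
  have hle := Set.ncard_le_ncard hsub ((List.finite_length_eq (Fin n) ℓ).subset fun _ h => h.2)
  rw [Set.ncard_coe_finset] at hle
  exact (Nat.cast_le.mpr hle).trans (hM ℓ hℓ)

theorem sum_pow_length_le (hc : 0 ≤ c) {x : ℝ} (hx : 0 ≤ x) (A : Finset (List (Fin n)))
    {N : ℕ} (hAN : ∀ a ∈ A, a.length ≤ N) (hAM : ∀ a ∈ A, 2 ≤ a.length → a ∈ M)
    (hM : ∀ ℓ : ℕ, 2 ≤ ℓ → (({m ∈ M | m.length = ℓ}).ncard : ℝ) ≤ c * (ℓ : ℝ) ^ p) :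
    ∑ a ∈ A, x ^ a.length ≤ 1 + n * x + c * ∑ ℓ ∈ range (N + 1), (ℓ : ℝ) ^ p * x ^ ℓ := by
  have hterm (ℓ : ℕ) : (#(A.filter (·.length = ℓ)) : ℝ) * x ^ ℓ ≤
      (if ℓ < 2 then (n * x) ^ ℓ else 0) + c * ((ℓ : ℝ) ^ p * x ^ ℓ) := by
    split_ifs with hℓ
    · have hcard : (#(A.filter (·.length = ℓ)) : ℝ) ≤ (n : ℝ) ^ ℓ := by
        exact_mod_cast (Fintype.card_fin n) ▸ card_filter_length_eq_le A ℓ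
      have : 0 ≤ c * ((ℓ : ℝ) ^ p * x ^ ℓ) := by positivity
      rw [mul_pow]
      nlinarith [pow_nonneg hx ℓ]
    · rw [zero_add, ← mul_assoc]
      exact mul_le_mul_of_nonneg_right
        (card_filter_length_eq_le_of_subset A hAM hM (by omega)) (pow_nonneg hx ℓ)
  have hsmall : ∑ ℓ ∈ range (N + 1), (if ℓ < 2 then ((n : ℝ) * x) ^ ℓ else 0) ≤ 1 + n * x :=
    calc ∑ ℓ ∈ range (N + 1), (if ℓ < 2 then ((n : ℝ) * x) ^ ℓ else 0)
        = ∑ ℓ ∈ (range (N + 1)).filter (· < 2), ((n : ℝ) * x) ^ ℓ := (sum_filter _ _).symm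
      _ ≤ ∑ ℓ ∈ range 2, ((n : ℝ) * x) ^ ℓ :=
        sum_le_sum_of_subset_of_nonneg (fun ℓ hℓ => by simpa using (mem_filter.mp hℓ).2)
          fun _ _ _ => by positivity
      _ = 1 + n * x := by simp [sum_range_succ]
  calc ∑ a ∈ A, x ^ a.length
      = ∑ ℓ ∈ range (N + 1), (#(A.filter (·.length = ℓ)) : ℝ) * x ^ ℓ := by
        rw [← sum_fiberwise_of_maps_to (g := List.length) (t := range (N + 1))
          fun a ha => mem_range.mpr (Nat.lt_succ_of_le (hAN a ha))]
        refine sum_congr rfl fun ℓ _ => ?_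
        rw [sum_congr rfl fun a ha => by rw [(mem_filter.mp ha).2], sum_const, nsmul_eq_mul]
    _ ≤ ∑ ℓ ∈ range (N + 1),
          ((if ℓ < 2 then ((n : ℝ) * x) ^ ℓ else 0) + c * ((ℓ : ℝ) ^ p * x ^ ℓ)) :=
        sum_le_sum fun ℓ _ => hterm ℓ
    _ ≤ 1 + n * x + c * ∑ ℓ ∈ range (N + 1), (ℓ : ℝ) ^ p * x ^ ℓ := by
        rw [sum_add_distrib, ← mul_sum]
        exact add_le_add_left hsmall _

end Weight

section Analytic

open Real

theorem rpow_le_rpow_mul_exp {p D t : ℝ} (hp : 0 ≤ p) (hD : 0 < D) (ht : 0 ≤ t) :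
    t ^ p ≤ D ^ p * exp (p * (t / D - 1)) := by
  have h : t ≤ D * exp (t / D - 1) := by
    have := add_one_le_exp (t / D - 1)
    calc t = D * (t / D) := by field_simp
      _ ≤ D * exp (t / D - 1) := by gcongr; linarith
  calc t ^ p ≤ (D * exp (t / D - 1)) ^ p := rpow_le_rpow ht h hp
    _ = D ^ p * exp (p * (t / D - 1)) := by
      rw [mul_rpow hD.le (exp_pos _).le, ← exp_mul, mul_comm (t / D - 1)]

noncomputable def expansionWeight (p : ℝ) (d : ℕ) : ℝ := (1 - 1 / (2 * d)) * exp (-p / d)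

variable {p : ℝ} {d : ℕ}

theorem one_div_two_mul_le_half (hd : 1 ≤ d) : 1 / (2 * (d : ℝ)) ≤ 1 / 2 := by
  have : (1 : ℝ) ≤ d := by exact_mod_cast hd
  gcongr
  linarith

theorem expansionWeight_pos (hd : 1 ≤ d) : 0 < expansionWeight p d := by
  have := one_div_two_mul_le_half hd
  unfold expansionWeight
  have := exp_pos (-p / d)
  nlinarith

theorem expansionWeight_le_one (hp : 0 ≤ p) : expansionWeight p d ≤ 1 := by
  have : exp (-p / d) ≤ 1 := exp_le_one_iff.mpr (div_nonpos_of_nonpos_of_nonneg (by linarith)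
    (Nat.cast_nonneg d))
  have : 0 ≤ 1 / (2 * (d : ℝ)) := by positivity
  unfold expansionWeight
  have := exp_pos (-p / d)
  nlinarith

theorem sum_rpow_mul_expansionWeight_pow_le (hp : 0 ≤ p) (hd : 1 ≤ d) (m : ℕ) :
    ∑ ℓ ∈ range m, (ℓ : ℝ) ^ p * expansionWeight p d ^ ℓ ≤ 2 * d ^ (p + 1) * exp (-p) := by
  have hd₀ : (0 : ℝ) < d := by exact_mod_cast hd
  set β : ℝ := 1 - 1 / (2 * d)
  have hβ₀ : 0 ≤ β := by linarith [one_div_two_mul_le_half hd]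
  have hβ₁ : β < 1 := sub_lt_self 1 (by positivity)
  -- `ℓ ^ p ≤ d ^ p e^{p(ℓ/d - 1)}` is exactly cancelled by the factor `e^{-pℓ/d}` of the weight
  have hterm (ℓ : ℕ) : (ℓ : ℝ) ^ p * expansionWeight p d ^ ℓ ≤ d ^ p * exp (-p) * β ^ ℓ := by
    have hexp : exp (p * (ℓ / d - 1)) * exp (-p / d) ^ ℓ = exp (-p) := by
      rw [← exp_nat_mul, ← exp_add]
      congr 1
      field_simp
      ring
    calc (ℓ : ℝ) ^ p * expansionWeight p d ^ ℓ
        ≤ d ^ p * exp (p * (ℓ / d - 1)) * expansionWeight p d ^ ℓ :=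
          mul_le_mul_of_nonneg_right (rpow_le_rpow_mul_exp hp hd₀ (Nat.cast_nonneg ℓ))
            (pow_nonneg (expansionWeight_pos hd).le ℓ)
      _ = d ^ p * exp (-p) * β ^ ℓ := by
          rw [expansionWeight, mul_pow, ← hexp]
          ring
  have hgeom : ∑ ℓ ∈ range m, β ^ ℓ ≤ 2 * d := by
    rw [← Nat.Ico_zero_eq_range]
    refine (geom_sum_Ico_le_of_lt_one hβ₀ hβ₁).trans_eq ?_
    simp only [β, pow_zero]
    field_simp
    ring
  calc ∑ ℓ ∈ range m, (ℓ : ℝ) ^ p * expansionWeight p d ^ ℓ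
      ≤ ∑ ℓ ∈ range m, d ^ p * exp (-p) * β ^ ℓ := sum_le_sum fun ℓ _ => hterm ℓ
    _ ≤ d ^ p * exp (-p) * (2 * d) := by
        rw [← mul_sum]
        exact mul_le_mul_of_nonneg_left hgeom (by positivity)
    _ = 2 * d ^ (p + 1) * exp (-p) := by rw [rpow_add_one hd₀.ne']; ring

theorem exp_neg_le_two_mul_expansionWeight_pow (hd : 1 ≤ d) :
    exp (-p) ≤ 2 * expansionWeight p d ^ d := by
  have hd₀ : (0 : ℝ) < d := by exact_mod_cast hd
  have hβ : 1 / 2 ≤ (1 - 1 / (2 * d) : ℝ) ^ d := by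
    have := one_add_mul_le_pow (a := -(1 / (2 * (d : ℝ))))
      (by linarith [one_div_two_mul_le_half hd]) d
    rw [← sub_eq_add_neg] at this
    refine le_trans (le_of_eq ?_) this
    field_simp
    ring
  have hexp : exp (-p / d) ^ d = exp (-p) := by
    rw [← exp_nat_mul]
    congr 1
    field_simp
  rw [expansionWeight, mul_pow, hexp]
  nlinarith [exp_pos (-p)]

theorem one_le_rpow_mul_exp_neg (hp : 0 ≤ p) (hd : 3 ≤ d) : 1 ≤ (d : ℝ) ^ p * exp (-p) := by
  have hed : exp 1 ≤ d := exp_one_lt_d9.le.trans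
    (le_trans (by norm_num) (by exact_mod_cast hd : (3 : ℝ) ≤ d))
  calc (1 : ℝ) = exp p * exp (-p) := by rw [← exp_add]; simp
    _ ≤ d ^ p * exp (-p) := by
        gcongr
        calc exp p = exp 1 ^ p := (exp_one_rpow p).symm
          _ ≤ d ^ p := rpow_le_rpow (exp_pos 1).le hed hp

theorem one_add_mul_expansionWeight_add_mul_sum_le {n : ℕ} (hn : 1 ≤ n) {c : ℝ} (hc : 0 ≤ c)
    (hp : 0 ≤ p) (hd : 3 ≤ d) (m : ℕ) :
    1 + n * expansionWeight p d +
        c * ∑ ℓ ∈ range m, (ℓ : ℝ) ^ p * expansionWeight p d ^ ℓ ≤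
      4 * (n + c) * d ^ (p + 1) * expansionWeight p d ^ d := by
  have hd₀ : (0 : ℝ) < d := by exact_mod_cast (by omega : 0 < d)
  have hn₁ : (1 : ℝ) ≤ n := by exact_mod_cast hn
  have hx₁ := expansionWeight_le_one (d := d) hp
  have hsum := sum_rpow_mul_expansionWeight_pow_le hp (by omega : 1 ≤ d) m
  have hxd := exp_neg_le_two_mul_expansionWeight_pow (p := p) (by omega : 1 ≤ d)
  have hD : 1 ≤ (d : ℝ) ^ (p + 1) * exp (-p) := by
    have h3 : (3 : ℝ) ≤ d := by exact_mod_cast hd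
    rw [rpow_add_one hd₀.ne']
    nlinarith [one_le_rpow_mul_exp_neg hp hd]
  calc 1 + n * expansionWeight p d +
          c * ∑ ℓ ∈ range m, (ℓ : ℝ) ^ p * expansionWeight p d ^ ℓ
      ≤ 2 * n * (d ^ (p + 1) * exp (-p)) + c * (2 * d ^ (p + 1) * exp (-p)) := by
        gcongr
        nlinarith
    _ = 2 * (n + c) * d ^ (p + 1) * exp (-p) := by ring
    _ ≤ 2 * (n + c) * d ^ (p + 1) * (2 * expansionWeight p d ^ d) := by gcongr
    _ = 4 * (n + c) * d ^ (p + 1) * expansionWeight p d ^ d := by ring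

end Analytic

theorem exists_length_eq_not_flen_le {n : ℕ} (hn : 1 ≤ n) {c p : ℝ} (hc : 0 ≤ c) (hp : 0 ≤ p)
    {M : Set (List (Fin n))}
    (hM : ∀ ℓ : ℕ, 2 ≤ ℓ → (({m ∈ M | m.length = ℓ}).ncard : ℝ) ≤ c * (ℓ : ℝ) ^ p)
    {d : ℕ} (hd : 3 ≤ d) (hdn : 4 * ((n : ℝ) + c) * (d : ℝ) ^ (p + 1) < (n : ℝ) ^ d)
    {s : ℕ} (hs : 1 ≤ s) :
    ∃ w : List (Fin n), w.length = d * s ∧ ¬ flen (letters n ∪ M) w ≤ s := by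
  by_contra! hall
  set x := expansionWeight p d
  have hx : 0 < x := expansionWeight_pos (by omega)
  let A : Finset (List (Fin n)) := ((List.finite_length_le (Fin n) (d * s)).subset
    fun a (ha : a ∈ insert [] (letters n ∪ M) ∧ a.length ≤ d * s) => ha.2).toFinset
  have hmemA {a : List (Fin n)} :
      a ∈ A ↔ a ∈ insert [] (letters n ∪ M) ∧ a.length ≤ d * s := Set.Finite.mem_toFinset _
  have hcount : (n : ℝ) ^ (d * s) * x ^ (d * s) ≤ (∑ a ∈ A, x ^ a.length) ^ s := by
    simpa using card_pow_mul_pow_le_sum_pow A hx.le fun g => by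
      obtain ⟨L, hLS, hLw, hLs⟩ := exists_flatten_eq_of_flen_le (hall (List.ofFn g) (by simp))
      refine hLw ▸ exists_ofFn_flatten_eq (A := ↑A) (by simp [hmemA]) (fun a ha => ?_) hLs
      refine hmemA.mpr ⟨Set.mem_insert_of_mem _ (hLS a ha), ?_⟩
      simpa [hLw] using (List.sublist_flatten_of_mem ha).length_le
  have hweight : ∑ a ∈ A, x ^ a.length ≤ 4 * (n + c) * d ^ (p + 1) * x ^ d := by
    refine (sum_pow_length_le hc hx.le A (fun a ha => (hmemA.mp ha).2) (fun a ha ha2 => ?_)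
      hM).trans (one_add_mul_expansionWeight_add_mul_sum_le hn hc hp hd _)
    rcases (hmemA.mp ha).1 with rfl | ⟨i, rfl⟩ | haM
    · simp at ha2
    · simp at ha2
    · exact haM
  have : ((n : ℝ) ^ d * x ^ d) ^ s < ((n : ℝ) ^ d * x ^ d) ^ s :=
    calc ((n : ℝ) ^ d * x ^ d) ^ s = (n : ℝ) ^ (d * s) * x ^ (d * s) := by ring
      _ ≤ (4 * (n + c) * d ^ (p + 1) * x ^ d) ^ s :=
        hcount.trans (pow_le_pow_left₀ (sum_nonneg fun _ _ => by positivity) hweight s)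
      _ < ((n : ℝ) ^ d * x ^ d) ^ s := by gcongr
  exact lt_irrefl _ this

/-- **Polynomial density gives linear expansion in the free monoid.**
Let `n ≥ 2` and let `M ⊆ F_n` contain at most `c·ℓ^p` macros of each `G`-length `ℓ ≥ 2`
(constants `c > 0`, `p ≥ 0`). Then for any integer `d ≥ 3` with
`n^d > 4e(n + c)d^{p+1}`, we have `f_{G'}(s) < d·s` for all `s ≥ 1`; in particular
`f_{G'}(s) = O(s)`. -/
theorem free_polynomial_density_linear_expansion
    (n : ℕ) (hn : 2 ≤ n) (c p : ℝ) (hc : 0 < c) (hp : 0 ≤ p)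
    (M : Set (List (Fin n)))
    (hM : ∀ ℓ : ℕ, 2 ≤ ℓ → (({m ∈ M | m.length = ℓ}).ncard : ℝ) ≤ c * (ℓ : ℝ) ^ p)
    (d : ℕ) (hd : 3 ≤ d)
    (hineq : 4 * Real.exp 1 * ((n : ℝ) + c) * (d : ℝ) ^ (p + 1) < (n : ℝ) ^ d) :
    (∀ s : ℕ, 1 ≤ s → fexpansion (letters n ∪ M) s < ((d * s : ℕ) : ℝ≥0∞)) ∧
    (∃ C : ℝ, 0 < C ∧ ∀ s : ℕ, 1 ≤ s →
      fexpansion (letters n ∪ M) s ≤ ENNReal.ofReal (C * s)) := by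
  have hdn : 4 * ((n : ℝ) + c) * (d : ℝ) ^ (p + 1) < (n : ℝ) ^ d := by
    refine lt_of_le_of_lt ?_ hineq
    have := Real.add_one_le_exp 1
    have : 0 ≤ ((n : ℝ) + c) * (d : ℝ) ^ (p + 1) := by positivity
    nlinarith
  have hlt (s : ℕ) (hs : 1 ≤ s) : fexpansion (letters n ∪ M) s < ((d * s : ℕ) : ℝ≥0∞) := by
    obtain ⟨w, hw, hflen⟩ := exists_length_eq_not_flen_le (by omega) hc.le hp hM hd hdn hs
    exact hw ▸ fexpansion_lt_of_not_flen_le hflen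
  refine ⟨hlt, d, by positivity, fun s hs => (hlt s hs).le.trans_eq ?_⟩
  rw [← ENNReal.ofReal_natCast]
  push_cast
  rfl
end

section
/- Let F_n be the free monoid on n ≥ 2 generators G. There exists a macro set M ⊆ F_n such that: (i) |M ∩ S_r| / |S_r| → 0 as r → ∞; (ii) there exist constants K, c > 0 (depending only on n) with B_G(r) ⊆ B_{G'}(⌈K(log r)^2⌉) for all sufficiently large r; and consequently (iii) f_{G'}(s) ≥ exp(c√s) for all sufficiently large s, so in particular f_{G'}(s)/s → ∞ as s → ∞. -/
open scoped ENNReal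

/-!
A word of length `ℓ` is a macro when, for some `k ≥ log_n log_2 ℓ`, its first `k` letters, read as a
base-`n` numeral, equal `ℓ mod n^k`. Each such condition fixes the first `k` letters, so the macros of
length `ℓ` have density at most `∑_{k ≥ log_n log_2 ℓ} n^{-k} → 0`. Conversely, if `|w| ≤ r` and
`k = log_n log_2 r`, the prefix of `w` of the largest length `m ≤ |w|` congruent mod `n^k` to the
numeral of the first `k` letters of `w` is a macro, and fewer than `n^k ≤ log_2 r` letters of `w`
follow it. Hence `|w|_{G'} ≤ 2 log_2 r` on `B_G(r)`, so `f_{G'}(s) ≥ 2^{⌊s/2⌋}`.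
-/

open Filter

lemma List.ncard_length_eq (α : Type*) [Fintype α] (j : ℕ) :
    {w : List α | w.length = j}.ncard = Fintype.card α ^ j := by
  rw [← Nat.card_coe_set_eq, ← card_vector j, ← Nat.card_eq_fintype_card]
  rfl

lemma Nat.tendsto_log_atTop {b : ℕ} (hb : 1 < b) : Tendsto (Nat.log b) atTop atTop :=
  Nat.log_monotone.tendsto_atTop_atTop fun k => ⟨b ^ k, (Nat.log_pow hb k).ge⟩

lemma List.flatten_map_singleton {α : Type*} (w : List α) : (w.map ([·])).flatten = w := by
  induction w with
  | nil => rfl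
  | cons a w ih => simp [ih]

section WordLength

variable {n : ℕ}

lemma flen_le_length_of_flatten_eq {S : Set (List (Fin n))} {w : List (Fin n)}
    (L : List (List (Fin n))) (hL : ∀ x ∈ L, x ∈ S) (hw : L.flatten = w) :
    flen S w ≤ L.length :=
  sInf_le ⟨L, hL, hw, rfl⟩

lemma flen_letters_union_le_length (M : Set (List (Fin n))) (v : List (Fin n)) :
    flen (letters n ∪ M) v ≤ v.length := by
  simpa using flen_le_length_of_flatten_eq (S := letters n ∪ M) (v.map ([·]))
    (by simp [letters]) (List.flatten_map_singleton v)

lemma flen_letters_union_append_le {M : Set (List (Fin n))} {u : List (Fin n)} (hu : u ∈ M)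
    (v : List (Fin n)) : flen (letters n ∪ M) (u ++ v) ≤ ((v.length + 1 : ℕ) : ℕ∞) := by
  simpa using flen_le_length_of_flatten_eq (S := letters n ∪ M) (u :: v.map ([·]))
    (by simp [letters, hu]) (by simp [List.flatten_map_singleton])

lemma le_fexpansion {S : Set (List (Fin n))} {s r : ℕ}
    (h : ∀ w : List (Fin n), w.length ≤ r → flen S w ≤ s) : (r : ℝ≥0∞) ≤ fexpansion S s :=
  le_sSup ⟨r, rfl, h⟩

end WordLength

def macroDepth (n ℓ : ℕ) : ℕ := Nat.log n (Nat.log 2 ℓ)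

def sparseMacros (n : ℕ) : Set (List (Fin n)) :=
  {w | ∃ k, macroDepth n w.length ≤ k ∧ k ≤ w.length ∧
    Nat.ofDigits n ((w.take k).map (↑)) = w.length % n ^ k}

lemma macroDepth_le_self (n ℓ : ℕ) : macroDepth n ℓ ≤ ℓ :=
  (Nat.log_le_self _ _).trans (Nat.log_le_self _ _)

lemma macroDepth_mono (n : ℕ) {ℓ r : ℕ} (h : ℓ ≤ r) : macroDepth n ℓ ≤ macroDepth n r :=
  Nat.log_mono_right (Nat.log_mono_right h)

section SparseMacros

variable {n : ℕ}

lemma tendsto_macroDepth (hn : 2 ≤ n) : Tendsto (macroDepth n) atTop atTop :=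
  (Nat.tendsto_log_atTop hn).comp (Nat.tendsto_log_atTop one_lt_two)

lemma forall_mem_map_val_lt (u : List (Fin n)) : ∀ x ∈ u.map (↑), x < n := by
  simp

lemma ncard_ofDigits_take_eq_le (hn : 2 ≤ n) (ℓ k c : ℕ) :
    {w : List (Fin n) | w.length = ℓ ∧ Nat.ofDigits n ((w.take k).map (↑)) = c}.ncard ≤
      n ^ (ℓ - k) := by
  calc _ ≤ {v : List (Fin n) | v.length = ℓ - k}.ncard :=
        Set.ncard_le_ncard_of_injOn (List.drop k) (fun w hw => by simp [hw.1]) ?_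
          (List.finite_length_eq _ _)
    _ = n ^ (ℓ - k) := by simp [List.ncard_length_eq]
  rintro w ⟨hw, hwc⟩ v ⟨hv, hvc⟩ hdrop
  have htake : w.take k = v.take k :=
    List.map_injective_iff.2 Fin.val_injective <| Nat.ofDigits_inj_of_len_eq hn
      (by simp [hw, hv]) (forall_mem_map_val_lt _) (forall_mem_map_val_lt _) (hwc.trans hvc.symm)
  rw [← List.take_append_drop k w, ← List.take_append_drop k v, htake, hdrop]

lemma ncard_sparseMacros_inter_length_eq_le (hn : 2 ≤ n) (ℓ : ℕ) :
    (sparseMacros n ∩ {w | w.length = ℓ}).ncard ≤ n ^ (ℓ + 1 - macroDepth n ℓ) := by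
  set a := macroDepth n ℓ
  set A : ℕ → Set (List (Fin n)) :=
    fun k => {w | w.length = ℓ ∧ Nat.ofDigits n ((w.take k).map (↑)) = ℓ % n ^ k}
  have hsub : sparseMacros n ∩ {w | w.length = ℓ} ⊆ ⋃ k ∈ Finset.Icc a ℓ, A k := by
    rintro w ⟨⟨k, hak, hkw, hk⟩, rfl : w.length = ℓ⟩
    exact Set.mem_biUnion (Finset.mem_Icc.2 ⟨hak, hkw⟩) ⟨rfl, hk⟩
  have hfin : (⋃ k ∈ Finset.Icc a ℓ, A k).Finite :=
    (Finset.Icc a ℓ).finite_toSet.biUnion fun k _ =>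
      (List.finite_length_eq _ ℓ).subset fun _ hw => hw.1
  calc _ ≤ (⋃ k ∈ Finset.Icc a ℓ, A k).ncard := Set.ncard_le_ncard hsub hfin
    _ ≤ ∑ k ∈ Finset.Icc a ℓ, (A k).ncard := Finset.set_ncard_biUnion_le _ _
    _ ≤ ∑ k ∈ Finset.Icc a ℓ, n ^ (ℓ - k) :=
        Finset.sum_le_sum fun k _ => ncard_ofDigits_take_eq_le hn ℓ k _
    _ = ∑ j ∈ (Finset.Icc a ℓ).image (ℓ - ·), n ^ j :=
        (Finset.sum_image fun i hi j hj h => by simp at hi hj h; omega).symm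
    _ ≤ n ^ (ℓ + 1 - a) := (Nat.geomSum_lt hn fun j hj => by simp at hj; omega).le

theorem tendsto_ncard_sparseMacros_div (hn : 2 ≤ n) :
    Tendsto (fun r : ℕ => ((sparseMacros n ∩ {w | w.length = r}).ncard : ℝ) / (n : ℝ) ^ r)
      atTop (nhds 0) := by
  have hn' : (1 : ℝ) < n := by exact_mod_cast hn
  refine squeeze_zero (g := fun r => (n : ℝ) / (n : ℝ) ^ macroDepth n r) (fun _ => by positivity)
    (fun r => ?_) (tendsto_const_nhds.div_atTop
      ((tendsto_pow_atTop_atTop_of_one_lt hn').comp (tendsto_macroDepth hn)))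
  have hcard : ((sparseMacros n ∩ {w | w.length = r}).ncard : ℝ) ≤
      (n : ℝ) ^ (r + 1 - macroDepth n r) := by
    exact_mod_cast ncard_sparseMacros_inter_length_eq_le hn r
  rw [div_le_div_iff₀ (by positivity) (by positivity)]
  calc _ ≤ (n : ℝ) ^ (r + 1 - macroDepth n r) * (n : ℝ) ^ macroDepth n r := by gcongr
    _ = n * n ^ r := by
        rw [← pow_add, Nat.sub_add_cancel (by linarith [macroDepth_le_self n r]), pow_succ']

lemma exists_take_mem_sparseMacros (hn : 2 ≤ n) {w : List (Fin n)} {k : ℕ}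
    (hk : macroDepth n w.length ≤ k) (hw : k + n ^ k ≤ w.length) :
    ∃ m, w.length < m + n ^ k ∧ w.take m ∈ sparseMacros n := by
  have hc : Nat.ofDigits n ((w.take k).map (↑)) < n ^ k := by
    have := Nat.ofDigits_lt_base_pow_length hn (forall_mem_map_val_lt (w.take k))
    rwa [List.length_map, List.length_take_of_le (hw.trans' (Nat.le_add_right k _))] at this
  generalize hcdef : Nat.ofDigits n ((w.take k).map (↑)) = c at hc
  -- `m` is the largest length `≤ |w|` congruent to `c` mod `n^k`
  obtain ⟨q, x, hx, hqx⟩ : ∃ q x, x < n ^ k ∧ n ^ k * q + x = w.length - c :=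
    ⟨_, _, Nat.mod_lt _ (by positivity), Nat.div_add_mod _ _⟩
  have hmw : c + n ^ k * q ≤ w.length := by omega
  have hkm : k ≤ c + n ^ k * q := by omega
  refine ⟨c + n ^ k * q, by omega, k, ?_, ?_, ?_⟩ <;> rw [List.length_take_of_le hmw]
  · exact (macroDepth_mono n hmw).trans hk
  · exact hkm
  · rw [List.take_take, min_eq_left hkm, hcdef, Nat.add_mul_mod_self_left, Nat.mod_eq_of_lt hc]

theorem flen_sparseMacros_le (hn : 2 ≤ n) {r : ℕ} (hr : 2 ≤ r) {w : List (Fin n)}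
    (hw : w.length ≤ r) :
    flen (letters n ∪ sparseMacros n) w ≤ ((2 * Nat.log 2 r : ℕ) : ℕ∞) := by
  set k := macroDepth n r
  have hkr : n ^ k ≤ Nat.log 2 r := Nat.pow_log_le_self n (Nat.log_pos one_lt_two hr).ne'
  have hk : k < n ^ k := Nat.lt_pow_self (by omega)
  by_cases hshort : w.length < k + n ^ k
  · exact (flen_letters_union_le_length _ w).trans (Nat.cast_le.2 (by omega))
  obtain ⟨m, hm, hmem⟩ :=
    exists_take_mem_sparseMacros (k := k) hn (macroDepth_mono n hw) (not_lt.1 hshort)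
  calc flen _ w = flen _ (w.take m ++ w.drop m) := by rw [List.take_append_drop]
    _ ≤ (((w.drop m).length + 1 : ℕ) : ℕ∞) := flen_letters_union_append_le hmem _
    _ ≤ _ := Nat.cast_le.2 (by rw [List.length_drop]; omega)

theorem two_pow_le_fexpansion_sparseMacros (hn : 2 ≤ n) {s : ℕ} (hs : 2 ≤ s) :
    ((2 ^ (s / 2) : ℕ) : ℝ≥0∞) ≤ fexpansion (letters n ∪ sparseMacros n) s := by
  refine le_fexpansion fun w hw => (flen_sparseMacros_le hn ?_ hw).trans (Nat.cast_le.2 ?_)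
  · exact Nat.le_self_pow (by omega) 2
  · rw [Nat.log_pow one_lt_two]
    omega

end SparseMacros

lemma two_mul_natLog_le_eight_mul_log_sq {r : ℕ} (hr : 2 ≤ r) :
    (2 * Nat.log 2 r : ℝ) ≤ 8 * Real.log r ^ 2 := by
  have hlog2 := Real.log_two_gt_d9
  have hlogr : Real.log 2 ≤ Real.log r := Real.log_le_log two_pos (by exact_mod_cast hr)
  have hnat : (Nat.log 2 r : ℝ) * Real.log 2 ≤ Real.log r := by
    rw [← le_div_iff₀ (by positivity)]
    exact_mod_cast Real.natLog_le_logb r 2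
  nlinarith

lemma exp_sqrt_div_eight_le_two_pow {s : ℕ} (hs : 2 ≤ s) :
    Real.exp (1 / 8 * √s) ≤ 2 ^ (s / 2) := by
  have hlog2 := Real.log_two_gt_d9
  have hsqrt : √(s : ℝ) ≤ s :=
    Real.sqrt_le_self_iff.2 (Or.inr (by exact_mod_cast hs.trans' one_le_two))
  have hhalf : (s : ℝ) ≤ 4 * (s / 2 : ℕ) := by exact_mod_cast (by omega : s ≤ 4 * (s / 2))
  calc Real.exp (1 / 8 * √s) ≤ Real.exp ((s / 2 : ℕ) * Real.log 2) :=
        Real.exp_le_exp.2 (by nlinarith)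
    _ = 2 ^ (s / 2) := by rw [Real.exp_nat_mul, Real.exp_log two_pos]

theorem exp_sqrt_div_eight_le_fexpansion_sparseMacros {n : ℕ} (hn : 2 ≤ n) {s : ℕ}
    (hs : 2 ≤ s) :
    ENNReal.ofReal (Real.exp (1 / 8 * √s)) ≤ fexpansion (letters n ∪ sparseMacros n) s :=
  calc _ ≤ ENNReal.ofReal ((2 ^ (s / 2) : ℕ) : ℝ) :=
        ENNReal.ofReal_le_ofReal (by exact_mod_cast exp_sqrt_div_eight_le_two_pow hs)
    _ = ((2 ^ (s / 2) : ℕ) : ℝ≥0∞) := ENNReal.ofReal_natCast _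
    _ ≤ _ := two_pow_le_fexpansion_sparseMacros hn hs

theorem tendsto_div_self_nhds_top_of_exp_sqrt_le {f : ℕ → ℝ≥0∞} {c : ℝ} (hc : 0 < c)
    (hf : ∀ᶠ s : ℕ in atTop, ENNReal.ofReal (Real.exp (c * √s)) ≤ f s) :
    Tendsto (fun s => f s / s) atTop (nhds ⊤) := by
  have hreal : Tendsto (fun s : ℕ => Real.exp (c * √s) / s) atTop atTop := by
    refine ((tendsto_exp_mul_div_rpow_atTop 2 c hc).comp
      (Real.tendsto_sqrt_atTop.comp tendsto_natCast_atTop_atTop)).congr fun s => ?_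
    simp [Real.sq_sqrt]
  refine tendsto_nhds_top_mono (ENNReal.tendsto_ofReal_atTop.comp hreal) ?_
  filter_upwards [hf, eventually_gt_atTop 0] with s hs hpos
  rw [Function.comp_apply, ENNReal.ofReal_div_of_pos (by positivity), ENNReal.ofReal_natCast]
  exact ENNReal.div_le_div_right hs _

open Filter in
/-- **Probabilistic sparse macros give superlinear expansion in `F_n`.**
For the free monoid on `n ≥ 2` generators there is a macro set `M` whose sphere density
`|M ∩ S_r|/|S_r|` tends to `0`, yet for constants `K, c > 0` (depending only on `n`) one
has `B_G(r) ⊆ B_{G'}(⌈K(log r)^2⌉)` for all large `r`, hence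
`f_{G'}(s) ≥ exp(c√s)` for all large `s` and `f_{G'}(s)/s → ∞`. -/
theorem free_probabilistic_superlinear_expansion
    (n : ℕ) (hn : 2 ≤ n) :
    ∃ M : Set (List (Fin n)),
      (Tendsto (fun r : ℕ => ((M ∩ {w : List (Fin n) | w.length = r}).ncard : ℝ) / (n : ℝ) ^ r)
        atTop (nhds 0)) ∧
      (∃ K c : ℝ, 0 < K ∧ 0 < c ∧
        (∃ r₀ : ℕ, ∀ r : ℕ, r₀ ≤ r → ∀ w : List (Fin n), w.length ≤ r →
          flen (letters n ∪ M) w ≤ ((⌈K * (Real.log r) ^ 2⌉₊ : ℕ) : ℕ∞)) ∧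
        (∃ s₀ : ℕ, ∀ s : ℕ, s₀ ≤ s →
          ENNReal.ofReal (Real.exp (c * Real.sqrt s)) ≤ fexpansion (letters n ∪ M) s)) ∧
      (Tendsto (fun s : ℕ => fexpansion (letters n ∪ M) s / (s : ℝ≥0∞))
        atTop (nhds ⊤)) := by
  have hexp (s : ℕ) (hs : 2 ≤ s) := exp_sqrt_div_eight_le_fexpansion_sparseMacros hn hs
  refine ⟨sparseMacros n, tendsto_ncard_sparseMacros_div hn,
    ⟨8, 1 / 8, by norm_num, by norm_num, ⟨2, fun r hr w hw => ?_⟩, ⟨2, hexp⟩⟩,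
    tendsto_div_self_nhds_top_of_exp_sqrt_le (by norm_num) (eventually_atTop.2 ⟨2, hexp⟩)⟩
  have hceil : 2 * Nat.log 2 r ≤ ⌈8 * Real.log r ^ 2⌉₊ := by
    exact_mod_cast (two_mul_natLog_le_eight_mul_log_sq hr).trans (Nat.le_ceil _)
  exact (flen_sparseMacros_le hn hr hw).trans (Nat.cast_le.2 hceil)
end

section
/- Let F_n be the free monoid on n ≥ 2 generators G, let M ⊆ F_n, and set G' = G ∪ M. Suppose there exist r_0 ∈ ℕ and a function k(r) = O(log r) such that for every r ≥ r_0 and every word w = b_1⋯b_r of length r, there exist an index 1 ≤ i ≤ k(r) and a length ℓ ≥ r/2 with i + ℓ − 1 ≤ r such that the substring b_i ⋯ b_{i+ℓ−1} lies in M. Then there is a constant K such that for all sufficiently large r, every word w with |w|_G ≤ r satisfies |w|_{G'} ≤ K(log r)^2; i.e., B_G(r) ⊆ B_{G'}(⌈K(log r)^2⌉) for all large r. -/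
open scoped ENNReal

private lemma flat_sing {n : ℕ} (l : List (Fin n)) :
    (l.map (fun c => ([c] : List (Fin n)))).flatten = l := by
  induction l with
  | nil => rfl
  | cons a t ih => simp [ih]

private lemma rep_lemma {n : ℕ} (M : Set (List (Fin n))) (k : ℕ → ℕ) (r₀' : ℕ)
    (hr2 : 2 ≤ r₀')
    (hhalve : ∀ r : ℕ, r₀' ≤ r → ∀ w : List (Fin n), w.length = r →
      ∃ i ℓ : ℕ, 1 ≤ i ∧ i ≤ k r ∧ (r : ℝ) / 2 ≤ (ℓ : ℝ) ∧ i + ℓ - 1 ≤ r ∧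
        ((w.drop (i - 1)).take ℓ) ∈ M)
    (B : ℕ) :
    ∀ m : ℕ, (∀ j, 2 ≤ j → j ≤ m → k j ≤ B) → ∀ w : List (Fin n), w.length ≤ m →
      ∃ L : List (List (Fin n)), (∀ x ∈ L, x ∈ letters n ∪ M) ∧ L.flatten = w ∧
        L.length ≤ (B + 1) * (Nat.log 2 m + 1) + r₀' := by
  intro m
  induction m using Nat.strong_induction_on with
  | _ m IH =>
    intro hB w hw
    by_cases hlt : w.length < r₀'
    · refine ⟨w.map (fun c => [c]), ?_, ?_, ?_⟩
      · intro x hx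
        simp only [List.mem_map] at hx
        obtain ⟨c, _, rfl⟩ := hx
        exact Or.inl ⟨c, rfl⟩
      · exact flat_sing w
      · simp only [List.length_map]
        omega
    · push_neg at hlt
      have hm2 : 2 ≤ m := le_trans hr2 (le_trans hlt hw)
      obtain ⟨i, ℓ, hi1, hik, hl2, hil, hmac⟩ := hhalve w.length hlt w rfl
      have hm2l : w.length ≤ 2 * ℓ := by
        have : (w.length : ℝ) ≤ 2 * ℓ := by linarith
        exact_mod_cast this
      have hdivlt : m / 2 < m := Nat.div_lt_self (by omega) (by omega)
      have hsuf : (w.drop (i - 1 + ℓ)).length ≤ m / 2 := by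
        rw [List.length_drop]
        omega
      obtain ⟨Ls, hLs1, hLs2, hLs3⟩ := IH (m / 2) hdivlt
        (fun j h2 hj => hB j h2 (le_trans hj (le_of_lt hdivlt)))
        (w.drop (i - 1 + ℓ)) hsuf
      refine ⟨(w.take (i - 1)).map (fun c => [c]) ++ [(w.drop (i - 1)).take ℓ] ++ Ls,
        ?_, ?_, ?_⟩
      · intro x hx
        simp only [List.mem_append, List.mem_map, List.mem_singleton] at hx
        rcases hx with (⟨c, _, rfl⟩ | rfl) | hx
        · exact Or.inl ⟨c, rfl⟩
        · exact Or.inr hmac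
        · exact hLs1 x hx
      · rw [List.flatten_append, List.flatten_append, hLs2]
        simp only [List.flatten_cons, List.flatten_nil, List.append_nil]
        rw [flat_sing (w.take (i - 1))]
        have h3 : w.drop (i - 1 + ℓ) = ((w.drop (i - 1)).drop ℓ) := by
          rw [List.drop_drop]
          try congr 1
          try omega
        rw [h3, List.append_assoc, List.take_append_drop, List.take_append_drop]
      · have hkB : k w.length ≤ B := hB w.length (by omega) hw
        have hlog1 : 1 ≤ Nat.log 2 m := Nat.log_pos (by omega) hm2
        have hlogdiv : Nat.log 2 (m / 2) = Nat.log 2 m - 1 := Nat.log_div_base 2 m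
        simp only [List.length_append, List.length_map, List.length_singleton,
          List.length_take]
        have : min (i - 1) w.length ≤ i - 1 := min_le_left _ _
        have hB1 : (B + 1) * (Nat.log 2 (m / 2) + 1) + (B + 1)
            = (B + 1) * (Nat.log 2 m + 1) := by
          rw [hlogdiv]
          have : Nat.log 2 m - 1 + 1 + 1 = Nat.log 2 m + 1 := by omega
          rw [← Nat.mul_add_one, this]
        omega

/-- **Recursive parsing: a halving macro scheme gives a `(log r)^2` bound.**
Let `n ≥ 2`, `M ⊆ F_n`, `G' = G ∪ M`. Suppose `k(r) = O(log r)` and for every `r ≥ r₀`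
every word `w = b_1⋯b_r` of length `r` contains a substring `b_i ⋯ b_{i+ℓ-1} ∈ M` with
`1 ≤ i ≤ k(r)` and `ℓ ≥ r/2` (and `i + ℓ - 1 ≤ r`). Then there is a constant `K` such
that for all large `r`, every `w` with `|w|_G ≤ r` has `|w|_{G'} ≤ K(log r)^2`, i.e.
`B_G(r) ⊆ B_{G'}(⌈K(log r)^2⌉)`. -/
theorem halving_scheme_logsquared_bound
    (n : ℕ) (hn : 2 ≤ n) (M : Set (List (Fin n))) (k : ℕ → ℕ)
    (hk : ∃ A : ℝ, 0 < A ∧ ∀ r : ℕ, 2 ≤ r → (k r : ℝ) ≤ A * Real.log r)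
    (r₀ : ℕ)
    (hhalve : ∀ r : ℕ, r₀ ≤ r → ∀ w : List (Fin n), w.length = r →
      ∃ i ℓ : ℕ, 1 ≤ i ∧ i ≤ k r ∧ (r : ℝ) / 2 ≤ (ℓ : ℝ) ∧ i + ℓ - 1 ≤ r ∧
        ((w.drop (i - 1)).take ℓ) ∈ M) :
    ∃ K : ℝ, 0 < K ∧ ∃ r₁ : ℕ, ∀ r : ℕ, r₁ ≤ r → ∀ w : List (Fin n), w.length ≤ r →
      flen (letters n ∪ M) w ≤ ((⌈K * (Real.log r) ^ 2⌉₊ : ℕ) : ℕ∞) := by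
  obtain ⟨A, hA, hkA⟩ := hk
  set r₀' : ℕ := max r₀ 2 with hr₀'
  have hr2 : 2 ≤ r₀' := le_max_right _ _
  have hhalve' : ∀ r : ℕ, r₀' ≤ r → ∀ w : List (Fin n), w.length = r →
      ∃ i ℓ : ℕ, 1 ≤ i ∧ i ≤ k r ∧ (r : ℝ) / 2 ≤ (ℓ : ℝ) ∧ i + ℓ - 1 ≤ r ∧
        ((w.drop (i - 1)).take ℓ) ∈ M :=
    fun r hr w hw => hhalve r (le_trans (le_max_left _ _) hr) w hw
  refine ⟨3 * A + 4, by linarith, ⌈Real.exp (max 1 (r₀' : ℝ))⌉₊, ?_⟩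
  intro r hr w hw
  have hrpos : (0:ℝ) < r := by
    have h1 : (1:ℝ) ≤ Real.exp (max 1 (r₀':ℝ)) :=
      Real.one_le_exp (le_trans zero_le_one (le_max_left _ _))
    have : Real.exp (max 1 (r₀':ℝ)) ≤ r := by
      have := Nat.ceil_le.mp hr
      exact_mod_cast this
    linarith
  have hLr : max 1 (r₀':ℝ) ≤ Real.log r := by
    have h1 : Real.exp (max 1 (r₀':ℝ)) ≤ r := by
      have := Nat.ceil_le.mp hr
      exact_mod_cast this
    calc max 1 (r₀':ℝ) = Real.log (Real.exp (max 1 (r₀':ℝ))) := (Real.log_exp _).symm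
      _ ≤ Real.log r := Real.log_le_log (Real.exp_pos _) h1
  have hL1 : (1:ℝ) ≤ Real.log r := le_trans (le_max_left _ _) hLr
  have hLr0 : (r₀':ℝ) ≤ Real.log r := le_trans (le_max_right _ _) hLr
  set B : ℕ := ⌊A * Real.log r⌋₊ with hBdef
  have hBk : ∀ j, 2 ≤ j → j ≤ r → k j ≤ B := by
    intro j h2 hj
    apply Nat.le_floor
    calc (k j : ℝ) ≤ A * Real.log j := hkA j h2
      _ ≤ A * Real.log r := by
          apply mul_le_mul_of_nonneg_left _ (le_of_lt hA)
          apply Real.log_le_log (by exact_mod_cast h2.trans' (by norm_num) : (0:ℝ) < j)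
          exact_mod_cast hj
  obtain ⟨L, hL1', hL2, hL3⟩ := rep_lemma M k r₀' hr2 hhalve' B r hBk w hw
  have hflen : flen (letters n ∪ M) w ≤ (L.length : ℕ∞) :=
    sInf_le ⟨L, hL1', hL2, rfl⟩
  refine le_trans hflen ?_
  have hnat : L.length ≤ ⌈(3 * A + 4) * (Real.log r) ^ 2⌉₊ := by
    have hBr : (B : ℝ) ≤ A * Real.log r :=
      Nat.floor_le (by positivity)
    have hnl : (Nat.log 2 r : ℝ) ≤ 2 * Real.log r := by
      have hr1 : 1 ≤ r := by
        by_contra h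
        push_neg at h
        interval_cases r <;> simp_all
      have hp : (2:ℕ) ^ Nat.log 2 r ≤ r := Nat.pow_log_le_self 2 (by omega)
      have hpR : (2:ℝ) ^ (Nat.log 2 r) ≤ (r:ℝ) := by exact_mod_cast hp
      have hlp : (Nat.log 2 r : ℝ) * Real.log 2 ≤ Real.log r := by
        have := Real.log_le_log (by positivity) hpR
        rwa [Real.log_pow] at this
      have h2 : (0.6931471803 : ℝ) < Real.log 2 := Real.log_two_gt_d9
      nlinarith [(Nat.cast_nonneg (Nat.log 2 r) : (0:ℝ) ≤ Nat.log 2 r)]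
    have hreal : ((B + 1) * (Nat.log 2 r + 1) + r₀' : ℝ)
        ≤ (3 * A + 4) * (Real.log r) ^ 2 := by
      nlinarith [hBr, hnl, hL1, hLr0, hA.le, (Nat.cast_nonneg B : (0:ℝ) ≤ B),
        (Nat.cast_nonneg (Nat.log 2 r) : (0:ℝ) ≤ Nat.log 2 r), sq_nonneg (Real.log r)]
    have : (L.length : ℝ) ≤ (3 * A + 4) * (Real.log r) ^ 2 := by
      refine le_trans ?_ hreal
      exact_mod_cast hL3
    calc L.length ≤ ⌈(L.length : ℝ)⌉₊ := by simp
      _ ≤ ⌈(3 * A + 4) * (Real.log r) ^ 2⌉₊ := Nat.ceil_le_ceil this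
  exact_mod_cast hnat
end

section
/- Let A_1 = ℕ with generator G = {1}, let b ≥ 2 be an integer, and let M = { b^{b^j} : j ≥ 0 }. Then the macro set M has double-logarithmic density (the number of macros of value at most r is the number of j with b^{b^j} ≤ r, i.e., at most log_b log_b r + 1), and there exist constants c_1, c_2 > 0 depending only on b such that c_1 · s^{b/(b−1)} ≤ f_{G'}(s) ≤ c_2 · s^{(2b−1)/(b−1)} for all integers s ≥ 1. -/
open scoped ENNReal

/-- The length of `x ∈ ℕ = A_1` with respect to a generating set `S ⊆ ℕ`: the minimum
number of elements of `S` (with repetition) summing to `x`; `⊤` if not representable. -/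
noncomputable def nlen (S : Set ℕ) (x : ℕ) : ℕ∞ :=
  sInf {k : ℕ∞ | ∃ l : Multiset ℕ, (∀ m ∈ l, m ∈ S) ∧ l.sum = x ∧ (l.card : ℕ∞) = k}

/-- The expansion function `f_{G'}(s) = sup { r ∈ ℕ : B_G(r) ⊆ B_{G'}(s) }` for `A_1 = ℕ`
with `G = {1}`, valued in `ℝ≥0∞` (so `⊤` means the inclusion holds for every radius). -/
noncomputable def nexpansion (S : Set ℕ) (s : ℕ) : ℝ≥0∞ :=
  sSup {x : ℝ≥0∞ | ∃ r : ℕ, x = (r : ℝ≥0∞) ∧ ∀ y : ℕ, y ≤ r → nlen S y ≤ (s : ℕ∞)}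

/-!
Let `m_j = b ^ b ^ j`, so that `m_{j+1} = m_j ^ b`. For `m_k ≤ y < m_{k+1}` write greedily
`y = q m_k + r` with `r < m_k`: then `q ≤ y / m_k ≤ y^{(b-1)/b}` because `m_k^b > y`, and the
same greedy procedure one level down writes `r` with at most `2 m_{k-1}^{b-1} + b` generators,
where `m_{k-1}^{b-1} ≤ y^{(b-1)/b}` because `m_{k-1}^b = m_k ≤ y`. So `|y|_{G'} ≤ (b+3) y^{(b-1)/b}`,
which inverts to the lower bound on `f_{G'}`.

For the upper bound take `t` least with `s + 1 < m_t^{b-1}`. Every generator not exceeding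
`y = (s+1) m_t < m_{t+1}` is at most `m_t`, so `y` needs more than `s` generators, while the
minimality of `t` gives `m_t ≤ b (s+1)^{b/(b-1)}`.
-/

section Length

variable {S : Set ℕ}

lemma nlen_le_card {l : Multiset ℕ} (hl : ∀ m ∈ l, m ∈ S) : nlen S l.sum ≤ l.card :=
  sInf_le ⟨l, hl, rfl, rfl⟩

lemma exists_multiset_card_eq_nlen {x : ℕ} (hx : nlen S x ≠ ⊤) :
    ∃ l : Multiset ℕ, (∀ m ∈ l, m ∈ S) ∧ l.sum = x ∧ (l.card : ℕ∞) = nlen S x :=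
  csInf_mem
    (s := {k : ℕ∞ | ∃ l : Multiset ℕ, (∀ m ∈ l, m ∈ S) ∧ l.sum = x ∧ (l.card : ℕ∞) = k})
    (Set.nonempty_iff_ne_empty.mpr fun h => hx (by rw [nlen, h, sInf_empty]))

lemma nlen_add_le (x y : ℕ) : nlen S (x + y) ≤ nlen S x + nlen S y := by
  rcases eq_or_ne (nlen S x) ⊤ with hx | hx
  · simp [hx]
  rcases eq_or_ne (nlen S y) ⊤ with hy | hy
  · simp [hy]
  obtain ⟨l, hlS, rfl, hl⟩ := exists_multiset_card_eq_nlen hx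
  obtain ⟨l', hl'S, rfl, hl'⟩ := exists_multiset_card_eq_nlen hy
  rw [← hl, ← hl', ← Nat.cast_add, ← Multiset.card_add, ← Multiset.sum_add]
  exact nlen_le_card fun m hm => (Multiset.mem_add.mp hm).elim (hlS m) (hl'S m)

lemma nlen_mul_le {m : ℕ} (hm : m ∈ S) (q : ℕ) : nlen S (q * m) ≤ q := by
  simpa using nlen_le_card (l := Multiset.replicate q m) fun x hx =>
    Multiset.eq_of_mem_replicate hx ▸ hm

lemma nlen_le_self (h1 : 1 ∈ S) (y : ℕ) : nlen S y ≤ y := by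
  simpa using nlen_mul_le h1 y

lemma nlen_le_div_add_nlen_mod {m : ℕ} (hm : m ∈ S) (y : ℕ) :
    nlen S y ≤ (y / m : ℕ) + nlen S (y % m) := by
  conv_lhs => rw [← Nat.div_add_mod' y m]
  exact (nlen_add_le _ _).trans (add_le_add_left (nlen_mul_le hm _) _)

lemma lt_nlen_of_mul_lt {y g k : ℕ} (hS : ∀ m ∈ S, m ≤ y → m ≤ g) (hy : k * g < y) :
    (k : ℕ∞) < nlen S y := by
  refine (ENat.add_one_le_iff (ENat.natCast_ne_top k)).mp (le_sInf ?_)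
  rintro _ ⟨l, hlS, rfl, rfl⟩
  have hsum : l.sum ≤ l.card * g := by
    simpa using Multiset.sum_le_card_nsmul l g fun m hm =>
      hS m (hlS m hm) (Multiset.le_sum_of_mem hm)
  exact_mod_cast Nat.lt_of_mul_lt_mul_right (hy.trans_le hsum)

lemma le_nexpansion {s r : ℕ} (h : ∀ y ≤ r, nlen S y ≤ s) : (r : ℝ≥0∞) ≤ nexpansion S s :=
  le_sSup ⟨r, rfl, h⟩

lemma nexpansion_le_of_lt_nlen {s y : ℕ} (h : (s : ℕ∞) < nlen S y) : nexpansion S s ≤ y := by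
  refine sSup_le ?_
  rintro _ ⟨r, rfl, hr⟩
  exact_mod_cast (lt_of_not_ge fun hyr => (hr y hyr).not_gt h).le

end Length

lemma exists_le_and_lt_succ {f : ℕ → ℕ} (hf : StrictMono f) {y : ℕ} (hy : f 0 ≤ y) :
    ∃ k, f k ≤ y ∧ y < f (k + 1) := by
  have hex : ∃ n, y < f n := ⟨y + 1, (hf.id_le y).trans_lt (hf y.lt_succ_self)⟩
  have hpos : Nat.find hex ≠ 0 := fun h => (Nat.find_spec hex).not_ge (h ▸ hy)
  refine ⟨Nat.find hex - 1, not_lt.mp (Nat.find_min hex (by omega)), ?_⟩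
  rw [Nat.sub_add_cancel (Nat.one_le_iff_ne_zero.mpr hpos)]
  exact Nat.find_spec hex

lemma pow_le_rpow_of_pow_le {x y : ℝ} (hx : 0 ≤ x) {n : ℕ} (hn : n ≠ 0) (h : x ^ n ≤ y)
    (m : ℕ) : x ^ m ≤ y ^ ((m : ℝ) / n) :=
  calc x ^ m = (x ^ n) ^ ((m : ℝ) / n) := by
        rw [← Real.rpow_natCast x n, ← Real.rpow_mul hx, mul_div_cancel₀ _ (by exact_mod_cast hn),
          Real.rpow_natCast]
    _ ≤ y ^ ((m : ℝ) / n) := Real.rpow_le_rpow (by positivity) h (by positivity)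

lemma div_le_rpow_of_le_pow {y g : ℝ} (hy : 0 ≤ y) (hg : 0 < g) {n : ℕ} (hn : n ≠ 0)
    (h : y ≤ g ^ n) : y / g ≤ y ^ (((n : ℝ) - 1) / n) := by
  rcases hy.eq_or_lt with rfl | hy
  · simpa using Real.rpow_nonneg le_rfl _
  have hroot : y ^ (n⁻¹ : ℝ) ≤ g := by
    simpa [Real.pow_rpow_inv_natCast hg.le hn] using
      Real.rpow_le_rpow hy.le h (by positivity : (0 : ℝ) ≤ (n : ℝ)⁻¹)
  calc y / g ≤ y / y ^ (n⁻¹ : ℝ) := div_le_div_of_nonneg_left hy.le (by positivity) hroot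
    _ = y ^ (((n : ℝ) - 1) / n) := by
        rw [sub_div, div_self (by exact_mod_cast hn), one_div, Real.rpow_sub hy, Real.rpow_one]

lemma two_mul_pow_pred_le {g n : ℕ} (hg : 2 ≤ g) (hn : 2 ≤ n) :
    2 * g ^ (n - 1) ≤ (g ^ n) ^ (n - 1) := by
  set x := g ^ (n - 1)
  have hx : 2 ≤ x := hg.trans (Nat.le_self_pow (by omega) g)
  calc 2 * x ≤ x ^ 2 := by rw [sq]; exact Nat.mul_le_mul_right x hx
    _ ≤ x ^ n := Nat.pow_le_pow_right (by omega) hn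
    _ = (g ^ n) ^ (n - 1) := by rw [← pow_mul, ← pow_mul, mul_comm]

lemma half_le_max_one_floor (x : ℝ) : x / 2 ≤ ((max 1 ⌊x⌋₊ : ℕ) : ℝ) := by
  have hfloor := Nat.lt_floor_add_one x
  rcases le_total 1 ⌊x⌋₊ with h | h
  · have h' : (1 : ℝ) ≤ ⌊x⌋₊ := by exact_mod_cast h
    rw [max_eq_right h]
    linarith
  · have h' : (⌊x⌋₊ : ℝ) ≤ 1 := by exact_mod_cast h
    rw [max_eq_left h, Nat.cast_one]
    linarith

def doublePow (b j : ℕ) : ℕ := b ^ b ^ j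

section DoublePow

variable {b : ℕ}

lemma doublePow_zero : doublePow b 0 = b := by simp [doublePow]

lemma doublePow_succ (j : ℕ) : doublePow b (j + 1) = doublePow b j ^ b := by
  rw [doublePow, doublePow, ← pow_mul, ← pow_succ]

lemma doublePow_pos (hb : 0 < b) (j : ℕ) : 0 < doublePow b j := by
  unfold doublePow; positivity

lemma doublePow_strictMono (hb : 2 ≤ b) : StrictMono (doublePow b) := fun _ _ hij =>
  Nat.pow_lt_pow_right (by omega) (Nat.pow_lt_pow_right (by omega) hij)

lemma le_doublePow (hb : 2 ≤ b) (j : ℕ) : b ≤ doublePow b j :=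
  calc b = doublePow b 0 := doublePow_zero.symm
    _ ≤ doublePow b j := (doublePow_strictMono hb).monotone j.zero_le

lemma le_logb_logb_of_doublePow_le (hb : 2 ≤ b) {j r : ℕ} (h : doublePow b j ≤ r) :
    (j : ℝ) ≤ Real.logb b (Real.logb b r) := by
  have hb1 : (1 : ℝ) < b := by exact_mod_cast hb
  have hbr : (b : ℝ) ≤ r := by exact_mod_cast (le_doublePow hb j).trans h
  have hlog : 1 ≤ Real.logb b r := by rwa [Real.le_logb_iff_rpow_le hb1 (by linarith), Real.rpow_one]
  rw [Real.le_logb_iff_rpow_le hb1 (by linarith), Real.rpow_natCast,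
    Real.le_logb_iff_rpow_le hb1 (by linarith), ← Nat.cast_pow, Real.rpow_natCast]
  exact_mod_cast h

lemma ncard_doublePow_le (hb : 2 ≤ b) {r : ℕ} (hr : b ≤ r) :
    (({x ∈ Set.range (doublePow b) | x ≤ r}).ncard : ℝ) ≤ Real.logb b (Real.logb b r) + 1 := by
  set L := Real.logb b (Real.logb b r)
  have hL : 0 ≤ L := by
    simpa using le_logb_logb_of_doublePow_le hb (j := 0) (by rwa [doublePow_zero])
  have hsub : {x ∈ Set.range (doublePow b) | x ≤ r} ⊆ doublePow b '' Set.Iic ⌊L⌋₊ := by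
    rintro _ ⟨⟨j, rfl⟩, hj⟩
    exact ⟨j, Nat.le_floor (le_logb_logb_of_doublePow_le hb hj), rfl⟩
  have hcard : ({x ∈ Set.range (doublePow b) | x ≤ r}).ncard ≤ ⌊L⌋₊ + 1 :=
    calc _ ≤ (doublePow b '' Set.Iic ⌊L⌋₊).ncard :=
          Set.ncard_le_ncard hsub ((Set.finite_Iic _).image _)
      _ ≤ (Set.Iic ⌊L⌋₊).ncard := Set.ncard_image_le (Set.finite_Iic _)
      _ = ⌊L⌋₊ + 1 := by simp
  calc _ ≤ (⌊L⌋₊ : ℝ) + 1 := by exact_mod_cast hcard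
    _ ≤ L + 1 := by linarith [Nat.floor_le hL]

lemma div_doublePow_lt (hb : 2 ≤ b) {j y : ℕ} (hy : y < doublePow b (j + 1)) :
    y / doublePow b j < doublePow b j ^ (b - 1) :=
  Nat.div_lt_of_lt_mul (by rwa [mul_pow_sub_one (by omega), ← doublePow_succ])

lemma nlen_le_of_lt_doublePow_succ (hb : 2 ≤ b) {S : Set ℕ} (h1 : 1 ∈ S)
    (hS : ∀ j, doublePow b j ∈ S) (j : ℕ) {y : ℕ} (hy : y < doublePow b (j + 1)) :
    nlen S y ≤ (2 * doublePow b j ^ (b - 1) + b : ℕ) := by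
  have hq := div_doublePow_lt hb hy
  induction j generalizing y with
  | zero =>
    rw [doublePow_zero] at hq ⊢
    have hmod : y % b < b := Nat.mod_lt _ (by omega)
    calc nlen S y ≤ ((y / b : ℕ) : ℕ∞) + nlen S (y % b) :=
          doublePow_zero (b := b) ▸ nlen_le_div_add_nlen_mod (hS 0) y
      _ ≤ ((y / b : ℕ) : ℕ∞) + (y % b : ℕ) := add_le_add_right (nlen_le_self h1 _) _
      _ ≤ _ := by exact_mod_cast (by omega : y / b + y % b ≤ 2 * b ^ (b - 1) + b)
  | succ j ih =>
    set g := doublePow b (j + 1) with hg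
    have hmod : y % g < g := Nat.mod_lt _ (doublePow_pos (by omega) _)
    have hgrowth : 2 * doublePow b j ^ (b - 1) ≤ g ^ (b - 1) := by
      rw [hg, doublePow_succ]
      exact two_mul_pow_pred_le (hb.trans (le_doublePow hb j)) hb
    calc nlen S y ≤ ((y / g : ℕ) : ℕ∞) + nlen S (y % g) := nlen_le_div_add_nlen_mod (hS _) y
      _ ≤ ((y / g : ℕ) : ℕ∞) + (2 * doublePow b j ^ (b - 1) + b : ℕ) :=
          add_le_add_right (ih hmod (div_doublePow_lt hb hmod)) _
      _ ≤ _ := by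
          exact_mod_cast (by omega :
            y / g + (2 * doublePow b j ^ (b - 1) + b) ≤ 2 * g ^ (b - 1) + b)

lemma exists_nlen_mod_doublePow_le (hb : 2 ≤ b) {S : Set ℕ} (h1 : 1 ∈ S)
    (hS : ∀ j, doublePow b j ∈ S) {k y : ℕ} (hk : doublePow b k ≤ y) :
    ∃ R : ℕ, nlen S (y % doublePow b k) ≤ R ∧
      (R : ℝ) ≤ 2 * (y : ℝ) ^ (((b : ℝ) - 1) / b) + b := by
  cases k with
  | zero =>
    have hmod : y % b < b := Nat.mod_lt _ (by omega)
    have hmod' : ((y % b : ℕ) : ℝ) ≤ b := by exact_mod_cast hmod.le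
    refine ⟨y % b, by rw [doublePow_zero]; exact nlen_le_self h1 _, ?_⟩
    have : (0 : ℝ) ≤ (y : ℝ) ^ (((b : ℝ) - 1) / b) := by positivity
    linarith
  | succ j =>
    refine ⟨_, nlen_le_of_lt_doublePow_succ hb h1 hS j
      (Nat.mod_lt _ (doublePow_pos (by omega) _)), ?_⟩
    rw [doublePow_succ] at hk
    have hjy := pow_le_rpow_of_pow_le (by positivity) (by omega)
      (by exact_mod_cast hk : ((doublePow b j : ℕ) : ℝ) ^ b ≤ y) (b - 1)
    rw [Nat.cast_pred (by omega)] at hjy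
    push_cast
    linarith

lemma nlen_le_of_mul_rpow_le (hb : 2 ≤ b) {S : Set ℕ} (h1 : 1 ∈ S)
    (hS : ∀ j, doublePow b j ∈ S) {y s : ℕ}
    (h : (b + 3) * (y : ℝ) ^ (((b : ℝ) - 1) / b) ≤ s) : nlen S y ≤ s := by
  set e : ℝ := ((b : ℝ) - 1) / b
  have hbR : (2 : ℝ) ≤ b := by exact_mod_cast hb
  rcases Nat.eq_zero_or_pos y with rfl | hy0
  · exact (nlen_le_self h1 0).trans (by simp)
  have hye : 1 ≤ (y : ℝ) ^ e :=
    Real.one_le_rpow (by exact_mod_cast hy0) (div_nonneg (by linarith) (by linarith))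
  rcases lt_or_ge y b with hyb | hyb
  · have hyb' : (y : ℝ) < b := by exact_mod_cast hyb
    have hys : (y : ℝ) ≤ s := by nlinarith
    exact (nlen_le_self h1 y).trans (by exact_mod_cast hys)
  obtain ⟨k, hk, hky⟩ := exists_le_and_lt_succ (doublePow_strictMono hb) (y := y)
    (by rw [doublePow_zero]; exact hyb)
  have hq : ((y / doublePow b k : ℕ) : ℝ) ≤ (y : ℝ) ^ e := by
    rw [doublePow_succ] at hky
    exact Nat.cast_div_le.trans (div_le_rpow_of_le_pow y.cast_nonneg
      (by exact_mod_cast doublePow_pos (by omega) k) (by omega) (by exact_mod_cast hky.le))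
  obtain ⟨R, hR, hRy⟩ := exists_nlen_mod_doublePow_le hb h1 hS hk
  have hsum : ((y / doublePow b k + R : ℕ) : ℝ) ≤ s := by push_cast; nlinarith
  calc nlen S y ≤ ((y / doublePow b k : ℕ) : ℕ∞) + nlen S (y % doublePow b k) :=
        nlen_le_div_add_nlen_mod (hS k) y
    _ ≤ ((y / doublePow b k : ℕ) : ℕ∞) + R := add_le_add_right hR _
    _ ≤ s := by exact_mod_cast hsum

lemma exists_lt_doublePow_pow_pred (hb : 2 ≤ b) {x : ℕ} (hx : 1 ≤ x) :
    ∃ t, x < doublePow b t ^ (b - 1) ∧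
      (doublePow b t : ℝ) ≤ b * (x : ℝ) ^ ((b : ℝ) / (b - 1)) := by
  have hbR : (2 : ℝ) ≤ b := by exact_mod_cast hb
  have hxE : 1 ≤ (x : ℝ) ^ ((b : ℝ) / (b - 1)) :=
    Real.one_le_rpow (by exact_mod_cast hx) (div_nonneg (by linarith) (by linarith))
  rcases lt_or_ge x (doublePow b 0 ^ (b - 1)) with h0 | h0
  · refine ⟨0, h0, ?_⟩
    rw [doublePow_zero]
    nlinarith
  obtain ⟨k, hk, hkx⟩ :=
    exists_le_and_lt_succ ((Nat.pow_left_strictMono (by omega)).comp (doublePow_strictMono hb)) h0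
  refine ⟨k + 1, hkx, ?_⟩
  have hkE := pow_le_rpow_of_pow_le (by positivity) (by omega)
    (by exact_mod_cast hk : ((doublePow b k : ℕ) : ℝ) ^ (b - 1) ≤ x) b
  rw [Nat.cast_pred (by omega)] at hkE
  rw [doublePow_succ]
  push_cast
  nlinarith

lemma nexpansion_doublePow_le (hb : 2 ≤ b) {s t : ℕ} (ht : s + 1 < doublePow b t ^ (b - 1)) :
    nexpansion (insert 1 (Set.range (doublePow b))) s ≤ ((s + 1) * doublePow b t : ℕ) := by
  apply nexpansion_le_of_lt_nlen
  have hpos := doublePow_pos (by omega : 0 < b) t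
  have hlt : (s + 1) * doublePow b t < doublePow b (t + 1) := by
    rw [doublePow_succ, ← pow_sub_one_mul (by omega)]
    exact Nat.mul_lt_mul_of_pos_right ht hpos
  refine lt_nlen_of_mul_lt ?_ (Nat.mul_lt_mul_of_pos_right s.lt_succ_self hpos)
  rintro m (rfl | ⟨i, rfl⟩) hm
  · exact hpos
  · exact (doublePow_strictMono hb).monotone
      (Nat.lt_succ_iff.mp ((doublePow_strictMono hb).lt_iff_lt.mp (hm.trans_lt hlt)))

lemma nexpansion_doublePow_le_rpow (hb : 2 ≤ b) {s : ℕ} (hs : 1 ≤ s) :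
    nexpansion (insert 1 (Set.range (doublePow b))) s
      ≤ ENNReal.ofReal (8 * b * (s : ℝ) ^ ((2 * (b : ℝ) - 1) / ((b : ℝ) - 1))) := by
  obtain ⟨t, ht, htR⟩ := exists_lt_doublePow_pow_pred hb (x := s + 1) (by omega)
  refine (nexpansion_doublePow_le hb ht).trans ?_
  rw [← ENNReal.ofReal_natCast]
  apply ENNReal.ofReal_le_ofReal
  have hbR : (2 : ℝ) ≤ b := by exact_mod_cast hb
  have hsR : (1 : ℝ) ≤ s := by exact_mod_cast hs
  set E := (b : ℝ) / (b - 1)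
  set F := (2 * (b : ℝ) - 1) / ((b : ℝ) - 1)
  have hb1 : (b : ℝ) - 1 ≠ 0 := by linarith
  have hF : F = 1 + E := by
    simp only [F, E]
    field_simp
    ring
  have hF0 : 0 ≤ F := div_nonneg (by linarith) (by linarith)
  have hF3 : F ≤ 3 := by
    simp only [F]
    rw [div_le_iff₀ (by linarith)]
    linarith
  push_cast at htR ⊢
  calc ((s : ℝ) + 1) * doublePow b t ≤ (s + 1) * (b * (s + 1) ^ E) := by gcongr
    _ = b * (s + 1) ^ F := by rw [hF, Real.rpow_add (by positivity), Real.rpow_one]; ring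
    _ ≤ b * (2 * s) ^ F := by gcongr; linarith
    _ = b * (2 ^ F * s ^ F) := by rw [Real.mul_rpow (by norm_num) (by positivity)]
    _ ≤ b * (2 ^ (3 : ℝ) * s ^ F) := by gcongr; norm_num
    _ = 8 * b * s ^ F := by norm_num; ring

lemma le_nexpansion_doublePow (hb : 2 ≤ b) {s : ℕ} (hs : 1 ≤ s) :
    ENNReal.ofReal ((((s : ℝ) / (b + 3)) ^ ((b : ℝ) / (b - 1))) / 2)
      ≤ nexpansion (insert 1 (Set.range (doublePow b))) s := by
  set x := ((s : ℝ) / (b + 3)) ^ ((b : ℝ) / (b - 1))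
  have h1 : 1 ∈ insert 1 (Set.range (doublePow b)) := Set.mem_insert _ _
  have hS (j : ℕ) : doublePow b j ∈ insert 1 (Set.range (doublePow b)) :=
    Set.mem_insert_of_mem _ ⟨j, rfl⟩
  have hbR : (2 : ℝ) ≤ b := by exact_mod_cast hb
  have hx : 0 ≤ x := Real.rpow_nonneg (by positivity) _
  have hxe : x ^ (((b : ℝ) - 1) / b) = s / (b + 3) := by
    rw [← Real.rpow_mul (by positivity), div_mul_div_comm, mul_comm,
      div_self (mul_ne_zero (by linarith) (by linarith)), Real.rpow_one]
  refine le_trans ?_ (le_nexpansion (r := max 1 ⌊x⌋₊) fun y hy => ?_)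
  · rw [← ENNReal.ofReal_natCast]
    exact ENNReal.ofReal_le_ofReal (half_le_max_one_floor x)
  rcases le_max_iff.mp hy with hy1 | hyx
  · exact (nlen_le_self h1 y).trans (by exact_mod_cast hy1.trans hs)
  refine nlen_le_of_mul_rpow_le hb h1 hS ?_
  have hyx' : (y : ℝ) ≤ x := (Nat.cast_le.mpr hyx).trans (Nat.floor_le hx)
  calc (b + 3) * (y : ℝ) ^ (((b : ℝ) - 1) / b) ≤ (b + 3) * x ^ (((b : ℝ) - 1) / b) := by
        gcongr
        exact div_nonneg (by linarith) (by linarith)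
    _ = s := by rw [hxe]; field_simp

end DoublePow

/-- **Double-logarithmic density gives polynomial expansion.**
For `A_1 = ℕ` with `G = {1}`, `b ≥ 2`, and `M = { b^{b^j} : j ≥ 0 }`, the macro set has
double-logarithmic density (for `r ≥ b`, the number of macros of value at most `r` is at
most `log_b log_b r + 1`), and there are constants `c₁, c₂ > 0` depending only on `b`
with `c₁·s^{b/(b-1)} ≤ f_{G'}(s) ≤ c₂·s^{(2b-1)/(b-1)}` for all `s ≥ 1`. -/
theorem double_log_density_polynomial_expansion
    (b : ℕ) (hb : 2 ≤ b)
    (M : Set ℕ) (hM : M = {x | ∃ j : ℕ, x = b ^ (b ^ j)}) :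
    (∀ r : ℕ, b ≤ r →
      (({x ∈ M | x ≤ r}).ncard : ℝ) ≤ Real.logb b (Real.logb b r) + 1) ∧
    (∃ c₁ c₂ : ℝ, 0 < c₁ ∧ 0 < c₂ ∧ ∀ s : ℕ, 1 ≤ s →
      ENNReal.ofReal (c₁ * (s : ℝ) ^ ((b : ℝ) / ((b : ℝ) - 1)))
          ≤ nexpansion (insert 1 M) s ∧
      nexpansion (insert 1 M) s
          ≤ ENNReal.ofReal (c₂ * (s : ℝ) ^ ((2 * (b : ℝ) - 1) / ((b : ℝ) - 1)))) := by
  obtain rfl : M = Set.range (doublePow b) := by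
    rw [hM]
    ext x
    simp [doublePow, eq_comm]
  refine ⟨fun r hr => ncard_doublePow_le hb hr,
    1 / (2 * ((b : ℝ) + 3) ^ ((b : ℝ) / (b - 1))), 8 * b, by positivity, by positivity,
    fun s hs => ⟨?_, nexpansion_doublePow_le_rpow hb hs⟩⟩
  convert le_nexpansion_doublePow hb hs using 2
  rw [Real.div_rpow (by positivity) (by positivity)]
  ring
end

section
/- Let b ≥ 2 be an integer, let M = { b^{b^j} : j ≥ 0 } ⊆ ℕ, set m_j = b^{b^j}, and define T_0 = b − 1 and T_k = (b^{b^{k−1}(b−1)} − 1) + T_{k−1} for k ≥ 1. Then for every j ≥ 0, max{ |x|_{G'} : 0 ≤ x < m_j } = T_j; i.e., the hardest element to compress below m_j is m_j − 1, whose G'-length is exactly T_j. -/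
open scoped ENNReal

/-!
The numbers `1, b^{b^0}, b^{b^1}, …` form a divisibility chain with successive ratios
`r_0 = b`, `r_{k+1} = b^{b^k (b-1)}`, so `{1} ∪ M` is the set of place values `p_n` of the
mixed radix `r`, and `T_j = ∑_{i ≤ j} (r_i - 1)` is the largest digit sum below
`p_{j+1} = b^{b^j}`. The greedy expansion in this radix gives the upper bound. For the lower
bound, a multiset of place values `≤ p_{n+1}` summing to `(q + 1) p_{n+1} - 1` contains some
number `a ≤ q` of copies of `p_{n+1} = r_n p_n`, and the rest sums to `(q - a + 1) r_n p_n - 1`.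
By induction on `n` the rest has at least `(q - a + 1) r_n - 1 + ∑_{i < n} (r_i - 1)` elements,
which is `≥ (q - a) + ∑_{i ≤ n} (r_i - 1)`.
-/

open Finset

def placeValue (r : ℕ → ℕ) (n : ℕ) : ℕ := ∏ i ∈ range n, r i

def maxDigitSum (r : ℕ → ℕ) (n : ℕ) : ℕ := ∑ i ∈ range n, (r i - 1)

@[simp] lemma placeValue_zero (r : ℕ → ℕ) : placeValue r 0 = 1 := prod_range_zero _

lemma placeValue_succ (r : ℕ → ℕ) (n : ℕ) : placeValue r (n + 1) = placeValue r n * r n :=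
  prod_range_succ _ _

lemma placeValue_pos {r : ℕ → ℕ} (hr : ∀ i, 0 < r i) (n : ℕ) : 0 < placeValue r n :=
  prod_pos fun i _ => hr i

lemma monotone_placeValue {r : ℕ → ℕ} (hr : ∀ i, 0 < r i) : Monotone (placeValue r) :=
  monotone_nat_of_le_succ fun n => by
    rw [placeValue_succ]
    exact Nat.le_mul_of_pos_right _ (hr n)

@[simp] lemma maxDigitSum_zero (r : ℕ → ℕ) : maxDigitSum r 0 = 0 := sum_range_zero _

lemma maxDigitSum_succ (r : ℕ → ℕ) (n : ℕ) :
    maxDigitSum r (n + 1) = maxDigitSum r n + (r n - 1) := sum_range_succ _ _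

lemma nlen_sum_le_card {S : Set ℕ} {l : Multiset ℕ} (hl : ∀ m ∈ l, m ∈ S) :
    nlen S l.sum ≤ (Multiset.card l : ℕ∞) :=
  sInf_le ⟨l, hl, rfl, rfl⟩

lemma exists_multiset_of_lt_placeValue (r : ℕ → ℕ) {n x : ℕ} (hx : x < placeValue r n) :
    ∃ l : Multiset ℕ, (∀ m ∈ l, m ∈ Set.range (placeValue r)) ∧ l.sum = x ∧
      Multiset.card l ≤ maxDigitSum r n := by
  induction n generalizing x with
  | zero => exact ⟨0, by simp, by simp_all, by simp⟩
  | succ n ih =>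
    set p := placeValue r n
    rw [placeValue_succ] at hx
    have hp : 0 < p := Nat.pos_of_mul_pos_right (Nat.zero_lt_of_lt hx)
    have hdigit : x / p < r n := (Nat.div_lt_iff_lt_mul hp).2 (by rwa [mul_comm])
    obtain ⟨l, hl, hsum, hcard⟩ := ih (Nat.mod_lt x hp)
    refine ⟨Multiset.replicate (x / p) p + l, ?_, ?_, ?_⟩
    · intro m hm
      rcases Multiset.mem_add.1 hm with hm | hm
      · exact ⟨n, (Multiset.eq_of_mem_replicate hm).symm⟩
      · exact hl m hm
    · rw [Multiset.sum_add, Multiset.sum_replicate, hsum, smul_eq_mul, mul_comm]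
      exact Nat.div_add_mod x p
    · rw [Multiset.card_add, Multiset.card_replicate, maxDigitSum_succ]
      omega

lemma nlen_range_placeValue_le (r : ℕ → ℕ) {n x : ℕ} (hx : x < placeValue r n) :
    nlen (Set.range (placeValue r)) x ≤ maxDigitSum r n := by
  obtain ⟨l, hl, rfl, hcard⟩ := exists_multiset_of_lt_placeValue r hx
  exact (nlen_sum_le_card hl).trans (by exact_mod_cast hcard)

lemma add_maxDigitSum_le_card {r : ℕ → ℕ} (hr : ∀ i, 0 < r i) {n q : ℕ} {l : Multiset ℕ}
    (hl : ∀ m ∈ l, m ∈ Set.range (placeValue r)) (hle : ∀ m ∈ l, m ≤ placeValue r n)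
    (hsum : l.sum + 1 = (q + 1) * placeValue r n) :
    q + maxDigitSum r n ≤ Multiset.card l := by
  induction n generalizing q l with
  | zero =>
    have := Multiset.sum_le_card_nsmul l 1 (by simpa using hle)
    simp only [placeValue_zero, smul_eq_mul, mul_one] at hsum this
    simp only [maxDigitSum_zero]
    omega
  | succ n ih =>
    set p := placeValue r (n + 1)
    set rest := l.filter (· ≠ p)
    have hsplit : Multiset.replicate (l.count p) p + rest = l := by
      rw [← Multiset.filter_eq']
      exact Multiset.filter_add_not _ l
    have hrest_le : ∀ m ∈ rest, m ≤ placeValue r n := by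
      intro m hm
      obtain ⟨hm, hne⟩ := Multiset.mem_filter.1 hm
      obtain ⟨i, rfl⟩ := hl m hm
      by_contra hlt
      have hi : n + 1 ≤ i := (monotone_placeValue hr).reflect_lt (not_le.1 hlt)
      exact hne (le_antisymm (hle _ hm) (monotone_placeValue hr hi))
    have hrest_sum : l.sum = l.count p * p + rest.sum := by
      conv_lhs => rw [← hsplit]
      rw [Multiset.sum_add, Multiset.sum_replicate, smul_eq_mul]
    have hcard : Multiset.card l = l.count p + Multiset.card rest := by
      conv_lhs => rw [← hsplit]
      rw [Multiset.card_add, Multiset.card_replicate]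
    have hcount : l.count p ≤ q :=
      Nat.lt_add_one_iff.1 (Nat.lt_of_mul_lt_mul_right (a := p) (c := q + 1) (by omega))
    obtain ⟨s, rfl⟩ := Nat.exists_eq_add_of_le hcount
    have hpos := hr n
    have hrest : rest.sum + 1 = ((s + 1) * r n - 1 + 1) * placeValue r n := by
      rw [Nat.sub_add_cancel (Nat.one_le_iff_ne_zero.2 (by positivity)), mul_assoc,
        mul_comm (r n), ← placeValue_succ]
      linarith
    have hrest_card :=
      ih (l := rest) (fun m hm => hl m (Multiset.mem_of_mem_filter hm)) hrest_le hrest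
    have hs : s ≤ s * r n := Nat.le_mul_of_pos_right s hpos
    have hexpand : (s + 1) * r n = s * r n + r n := by ring
    rw [maxDigitSum_succ, hcard]
    omega

lemma nlen_range_placeValue_sub_one {r : ℕ → ℕ} (hr : ∀ i, 0 < r i) (n : ℕ) :
    nlen (Set.range (placeValue r)) (placeValue r n - 1) = maxDigitSum r n := by
  have hp := placeValue_pos hr n
  refine le_antisymm (nlen_range_placeValue_le r (by omega)) (le_sInf ?_)
  rintro _ ⟨l, hl, hsum, rfl⟩
  have hle : ∀ m ∈ l, m ≤ placeValue r n := fun m hm =>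
    (Multiset.le_sum_of_mem hm).trans (by omega)
  have := add_maxDigitSum_le_card (q := 0) hr hl hle (by omega)
  rw [zero_add] at this
  exact_mod_cast this

def doubleExpRadix (b : ℕ) : ℕ → ℕ
  | 0 => b
  | k + 1 => b ^ (b ^ k * (b - 1))

lemma doubleExpRadix_pos {b : ℕ} (hb : 0 < b) (i : ℕ) : 0 < doubleExpRadix b i := by
  cases i <;> simp only [doubleExpRadix] <;> positivity

lemma placeValue_doubleExpRadix_succ {b : ℕ} (hb : 0 < b) (j : ℕ) :
    placeValue (doubleExpRadix b) (j + 1) = b ^ b ^ j := by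
  induction j with
  | zero => simp [placeValue_succ, doubleExpRadix]
  | succ j ih =>
    obtain ⟨c, rfl⟩ := Nat.exists_eq_add_of_lt hb
    rw [placeValue_succ, ih, doubleExpRadix, ← pow_add, pow_succ _ j]
    simp only [zero_add, add_tsub_cancel_right]
    ring

lemma range_placeValue_doubleExpRadix {b : ℕ} (hb : 0 < b) :
    Set.range (placeValue (doubleExpRadix b)) = insert 1 {x | ∃ j : ℕ, x = b ^ (b ^ j)} := by
  rw [← Nat.range_of_succ, Set.singleton_union, placeValue_zero]
  congr 1
  ext x
  simp [placeValue_doubleExpRadix_succ hb, eq_comm]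

lemma maxDigitSum_doubleExpRadix_succ (b k : ℕ) :
    maxDigitSum (doubleExpRadix b) (k + 2) =
      (b ^ (b ^ k * (b - 1)) - 1) + maxDigitSum (doubleExpRadix b) (k + 1) := by
  rw [maxDigitSum_succ _ (k + 1), doubleExpRadix, add_comm]

/-- **The elements `m_j - 1` are the hardest to compress.**
Let `b ≥ 2`, `M = { b^{b^j} : j ≥ 0 } ⊆ ℕ`, `G' = {1} ∪ M`, `m_j = b^{b^j}`, and define
`T_0 = b - 1` and `T_k = (b^{b^{k-1}(b-1)} - 1) + T_{k-1}` for `k ≥ 1`. Then for every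
`j ≥ 0`, `max{ |x|_{G'} : 0 ≤ x < m_j } = T_j`: every `x < m_j` has `|x|_{G'} ≤ T_j`,
and the hardest element `m_j - 1` has `|m_j - 1|_{G'}` exactly `T_j`. -/
theorem hardest_elements_double_log
    (b : ℕ) (hb : 2 ≤ b)
    (M : Set ℕ) (hM : M = {x | ∃ j : ℕ, x = b ^ (b ^ j)})
    (T : ℕ → ℕ) (hT0 : T 0 = b - 1)
    (hTk : ∀ k : ℕ, 1 ≤ k → T k = (b ^ (b ^ (k - 1) * (b - 1)) - 1) + T (k - 1)) :
    ∀ j : ℕ,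
      (∀ x : ℕ, x < b ^ (b ^ j) → nlen (insert 1 M) x ≤ ((T j : ℕ) : ℕ∞)) ∧
      nlen (insert 1 M) (b ^ (b ^ j) - 1) = ((T j : ℕ) : ℕ∞) := by
  have hb0 : 0 < b := by omega
  have hT : ∀ j, T j = maxDigitSum (doubleExpRadix b) (j + 1) := by
    intro j
    induction j with
    | zero => simp [maxDigitSum_succ, doubleExpRadix, hT0]
    | succ j ih =>
      rw [hTk (j + 1) (by omega), Nat.add_sub_cancel, ih, maxDigitSum_doubleExpRadix_succ]
  intro j
  rw [hM, ← range_placeValue_doubleExpRadix hb0, ← placeValue_doubleExpRadix_succ hb0, hT]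
  exact ⟨fun x hx => nlen_range_placeValue_le _ hx,
    nlen_range_placeValue_sub_one (doubleExpRadix_pos hb0) _⟩
end
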